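/- arXiv:1704.07200 — 4 statements merged into one kernel-verified Lean document; each statement's English description precedes it below -/
import Mathlib

section
/- Let α > 0 and let G be a properly edge-coloured graph on n vertices with at least 4αn² edges in which no single colour is α-rich. Then there exists a class U of colours that is α-rich in G and satisfies |E(G_U)| ≤ 4αn. -/
open scoped Classical

/-- A colouring of edges is proper if edges sharing a vertex get distinct colours. -/
def ProperColoring {V : Type*} (G : SimpleGraph V) (c : Sym2 V → ℕ) : Prop :=
  ∀ ⦃a b b' : V⦄, G.Adj a b → G.Adj a b' → b ≠ b' → c s(a, b) ≠ c s(a, b')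

/-- A set of edges is rainbow if its edges have pairwise distinct colours. -/
def IsRainbow {V : Type*} (c : Sym2 V → ℕ) (E : Set (Sym2 V)) : Prop :=
  Set.InjOn c E

/-- A finite set of edges forms a matching: non-loops, pairwise vertex-disjoint. -/
def IsMatchingSet {V : Type*} (M : Finset (Sym2 V)) : Prop :=
  (∀ e ∈ M, ¬ e.IsDiag) ∧
  ∀ e ∈ M, ∀ f ∈ M, e ≠ f → ∀ v : V, v ∈ e → v ∉ f

/-- A class `U` of colours is `α`-rich in `G`: the edges of `G` with colour in `U`
contain a matching of size at least `α * |V|`. -/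
def RichClass {V : Type*} [Fintype V] (G : SimpleGraph V) (c : Sym2 V → ℕ)
    (α : ℝ) (U : Set ℕ) : Prop :=
  ∃ M : Finset (Sym2 V), ↑M ⊆ G.edgeSet ∧ (∀ e ∈ M, c e ∈ U) ∧
    IsMatchingSet M ∧ α * (Fintype.card V : ℝ) ≤ (M.card : ℝ)

/-- `G` is `α`-well-coloured: its colours can be partitioned into `|V| - 1`
pairwise disjoint `α`-rich classes. -/
def WellColoured {V : Type*} [Fintype V] (G : SimpleGraph V) (c : Sym2 V → ℕ)
    (α : ℝ) : Prop :=
  ∃ U : Fin (Fintype.card V - 1) → Set ℕ,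
    (∀ i j, i ≠ j → Disjoint (U i) (U j)) ∧
    (∀ i, RichClass G c α (U i)) ∧
    (∀ e ∈ G.edgeSet, ∃ i, c e ∈ U i)

/-- A rainbow forest in `G`. -/
def RainbowForest {V : Type*} (G : SimpleGraph V) (c : Sym2 V → ℕ)
    (F : SimpleGraph V) : Prop :=
  F ≤ G ∧ F.IsAcyclic ∧ IsRainbow c F.edgeSet

/-- `G` is `(α, t)`-robustly-coloured: after removing the edges of any `t`
rainbow forests, `G` remains `α`-well-coloured. -/
def RobustlyColoured {V : Type*} [Fintype V] (G : SimpleGraph V) (c : Sym2 V → ℕ)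
    (α : ℝ) (t : ℕ) : Prop :=
  ∀ F : Fin t → SimpleGraph V, (∀ i, RainbowForest G c (F i)) →
    WellColoured (G.deleteEdges (⋃ i, (F i).edgeSet)) c α

theorem stmt2 {V : Type*} [Fintype V] [DecidableEq V] (G : SimpleGraph V)
    (c : Sym2 V → ℕ) (α : ℝ) (hα : 0 < α)
    (hproper : ProperColoring G c)
    (hedges : 4 * α * (Fintype.card V : ℝ) ^ 2 ≤ (G.edgeFinset.card : ℝ))
    (hnorich : ∀ k : ℕ, ¬ RichClass G c α {k}) :
    ∃ U : Set ℕ, RichClass G c α U ∧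
      (((G.edgeFinset.filter (fun e => c e ∈ U)).card : ℝ) ≤
        4 * α * (Fintype.card V : ℝ)) := by
  classical
  set n := Fintype.card V with hn
  set E := G.edgeFinset with hEdef
  -- trivial case: no vertices
  by_cases hn0 : n = 0
  · haveI : IsEmpty V := Fintype.card_eq_zero_iff.mp hn0
    have hEempty : E = ∅ := by
      rw [Finset.eq_empty_iff_forall_notMem]
      intro e he
      induction e using Sym2.ind with
      | _ x y => exact IsEmpty.elim ‹IsEmpty V› x
    refine ⟨∅, ⟨∅, by simp, by simp, ⟨by simp, by simp⟩, by simp [hn0]⟩, ?_⟩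
    rw [hEempty]
    simp [hn0]
  have hn1 : 1 ≤ n := Nat.one_le_iff_ne_zero.mpr hn0
  have hnR : (1 : ℝ) ≤ (n : ℝ) := by exact_mod_cast hn1
  have hαn : 0 < α * n := by positivity
  -- colour classes
  set Cls : ℕ → Finset (Sym2 V) := fun k => E.filter (fun e => c e = k) with hClsdef
  have hClsMatch : ∀ k, IsMatchingSet (Cls k) := by
    intro k
    constructor
    · intro e he
      exact SimpleGraph.not_isDiag_of_mem_edgeSet G
        (SimpleGraph.mem_edgeFinset.mp (Finset.mem_filter.mp he).1)
    · intro e he f hf hef v hve hvf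
      obtain ⟨he1, he2⟩ := Finset.mem_filter.mp he
      obtain ⟨hf1, hf2⟩ := Finset.mem_filter.mp hf
      obtain ⟨b, rfl⟩ := Sym2.mem_iff_exists.mp hve
      obtain ⟨b', rfl⟩ := Sym2.mem_iff_exists.mp hvf
      have hadj : G.Adj v b := (SimpleGraph.mem_edgeSet G).mp (SimpleGraph.mem_edgeFinset.mp he1)
      have hadj' : G.Adj v b' := (SimpleGraph.mem_edgeSet G).mp (SimpleGraph.mem_edgeFinset.mp hf1)
      have hbb' : b ≠ b' := by rintro rfl; exact hef rfl
      exact hproper hadj hadj' hbb' (he2.trans hf2.symm)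
  have hsmall : ∀ k, ((Cls k).card : ℝ) < α * n := by
    intro k
    by_contra hge
    push_neg at hge
    refine hnorich k ⟨Cls k, ?_, ?_, hClsMatch k, hge⟩
    · intro e he
      exact SimpleGraph.mem_edgeFinset.mp (Finset.mem_filter.mp he).1
    · intro e he
      exact (Finset.mem_filter.mp he).2
  -- weight and free-class-part
  set wt : Finset (Sym2 V) → ℕ :=
    fun M => (E.filter (fun e => c e ∈ M.image c)).card with hwtdef
  set avoid : Finset (Sym2 V) → Sym2 V → Prop :=
    fun M e => ∀ f ∈ M, ∀ v : V, v ∈ e → v ∉ f with havoiddef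
  set D : Finset (Sym2 V) → ℕ → Finset (Sym2 V) :=
    fun M k => (Cls k).filter (avoid M) with hDdef
  -- key counting step
  have key : ∀ M : Finset (Sym2 V), M ⊆ E → ((M.card : ℝ) < α * n) →
      (wt M ≤ 3 * M.card) →
      ∃ k, k ∉ M.image c ∧ 1 ≤ (D M k).card ∧ (Cls k).card ≤ 3 * (D M k).card := by
    intro M hMsub hMlt hWt
    by_contra hcon
    push_neg at hcon
    have h3k : ∀ k, k ∉ M.image c → 3 * (D M k).card ≤ (Cls k).card := by
      intro k hk
      rcases Nat.eq_zero_or_pos (D M k).card with h0 | h1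
      · rw [h0]; simp
      · exact le_of_lt (hcon k hk h1)
    set X := E.filter (fun e => c e ∉ M.image c) with hXdef
    set Z := X.filter (avoid M) with hZdef
    set Y := X.filter (fun e => ¬ avoid M e) with hYdef
    have hXcard : wt M + X.card = E.card := by
      rw [hwtdef, hXdef]
      exact Finset.card_filter_add_card_filter_not _
    have hYZ : Z.card + Y.card = X.card := by
      rw [hZdef, hYdef]
      exact Finset.card_filter_add_card_filter_not _
    -- fiberwise sums
    have hmemim : ∀ e ∈ X, c e ∈ X.image c := fun e he => Finset.mem_image_of_mem c he
    have hXsum : X.card = ∑ k ∈ X.image c, ((X.filter (fun e => c e = k)).card) :=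
      Finset.card_eq_sum_card_fiberwise hmemim
    have hZsum : Z.card = ∑ k ∈ X.image c, ((Z.filter (fun e => c e = k)).card) :=
      Finset.card_eq_sum_card_fiberwise (fun e he => hmemim e (Finset.mem_of_mem_filter e he))
    have hknotim : ∀ k ∈ X.image c, k ∉ M.image c := by
      intro k hk
      obtain ⟨e, he, rfl⟩ := Finset.mem_image.mp hk
      exact (Finset.mem_filter.mp he).2
    have hXfib : ∀ k ∈ X.image c, X.filter (fun e => c e = k) = Cls k := by
      intro k hk
      ext e
      simp only [hXdef, hClsdef, Finset.mem_filter]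
      constructor
      · rintro ⟨⟨he, -⟩, hck⟩; exact ⟨he, hck⟩
      · rintro ⟨he, hck⟩
        exact ⟨⟨he, by rw [hck]; exact hknotim k hk⟩, hck⟩
    have hZfib : ∀ k ∈ X.image c, Z.filter (fun e => c e = k) = D M k := by
      intro k hk
      ext e
      simp only [hZdef, hXdef, hDdef, hClsdef, Finset.mem_filter]
      constructor
      · rintro ⟨⟨⟨he, -⟩, hav⟩, hck⟩; exact ⟨⟨he, hck⟩, hav⟩
      · rintro ⟨⟨he, hck⟩, hav⟩
        exact ⟨⟨⟨he, by rw [hck]; exact hknotim k hk⟩, hav⟩, hck⟩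
    have hZX : 3 * Z.card ≤ X.card := by
      rw [hZsum, hXsum, Finset.mul_sum]
      refine Finset.sum_le_sum ?_
      intro k hk
      rw [hZfib k hk, hXfib k hk]
      exact h3k k (hknotim k hk)
    -- bound Y by vertex degrees
    set W := M.biUnion (fun f => Finset.univ.filter (· ∈ f)) with hWdef
    have hWcard : W.card ≤ 2 * M.card := by
      calc W.card ≤ ∑ f ∈ M, (Finset.univ.filter (· ∈ f)).card := Finset.card_biUnion_le
        _ ≤ ∑ _f ∈ M, 2 := by
            refine Finset.sum_le_sum ?_
            intro f _
            induction f using Sym2.ind with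
            | _ x y =>
              have : (Finset.univ.filter (· ∈ s(x, y))) ⊆ {x, y} := by
                intro v hv
                have := (Finset.mem_filter.mp hv).2
                simp only [Sym2.mem_iff] at this
                simp [this]
              calc (Finset.univ.filter (· ∈ s(x, y))).card ≤ ({x, y} : Finset V).card :=
                    Finset.card_le_card this
                _ ≤ 2 := Finset.card_insert_le _ _ |>.trans (by simp)
        _ = 2 * M.card := by rw [Finset.sum_const, smul_eq_mul, mul_comm]
    have hYsub : Y ⊆ W.biUnion (fun v => G.incidenceFinset v) := by
      intro e he
      obtain ⟨heX, hnav⟩ := Finset.mem_filter.mp he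
      have hnav2 : ∃ f ∈ M, ∃ v, v ∈ e ∧ v ∈ f := by
        by_contra hno
        push_neg at hno
        exact hnav (fun f hf v hv hvf => hno f hf v hv hvf)
      obtain ⟨f, hfM, v, hve, hvf⟩ := hnav2
      refine Finset.mem_biUnion.mpr ⟨v, ?_, ?_⟩
      · exact Finset.mem_biUnion.mpr ⟨f, hfM, Finset.mem_filter.mpr ⟨Finset.mem_univ v, hvf⟩⟩
      · rw [SimpleGraph.mem_incidenceFinset]
        exact ⟨SimpleGraph.mem_edgeFinset.mp (Finset.mem_of_mem_filter e heX), hve⟩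
    have hY : Y.card ≤ 2 * M.card * (n - 1) := by
      calc Y.card ≤ (W.biUnion (fun v => G.incidenceFinset v)).card := Finset.card_le_card hYsub
        _ ≤ ∑ v ∈ W, (G.incidenceFinset v).card := Finset.card_biUnion_le
        _ ≤ ∑ _v ∈ W, (n - 1) := by
            refine Finset.sum_le_sum ?_
            intro v _
            rw [SimpleGraph.card_incidenceFinset_eq_degree]
            exact Nat.le_sub_one_of_lt (G.degree_lt_card_verts v)
        _ = W.card * (n - 1) := by rw [Finset.sum_const, smul_eq_mul]
        _ ≤ 2 * M.card * (n - 1) := Nat.mul_le_mul_right _ hWcard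
    -- combine
    have h2Y : 2 * X.card ≤ 3 * Y.card := by omega
    have hXR : (4 : ℝ) * α * n ^ 2 - 3 * M.card ≤ (X.card : ℝ) := by
      have h1 : (wt M : ℝ) + X.card = E.card := by exact_mod_cast hXcard
      have h2 : (wt M : ℝ) ≤ 3 * M.card := by
        calc (wt M : ℝ) ≤ (3 * M.card : ℕ) := by exact_mod_cast hWt
          _ = 3 * M.card := by push_cast; ring
      linarith [hedges]
    have hYR : (Y.card : ℝ) ≤ 2 * M.card * ((n : ℝ) - 1) := by
      calc (Y.card : ℝ) ≤ ((2 * M.card * (n - 1) : ℕ) : ℝ) := by exact_mod_cast hY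
        _ = 2 * M.card * ((n : ℝ) - 1) := by
            push_cast [Nat.cast_sub hn1]
            ring
    have h2YR : (2 : ℝ) * X.card ≤ 3 * Y.card := by exact_mod_cast h2Y
    nlinarith [hαn, hMlt, hnR, mul_pos hα (mul_pos (by linarith : (0:ℝ) < (n:ℝ)) (by linarith : (0:ℝ) < (n:ℝ)))]
  -- main induction
  have main : ∀ j : ℕ, ∃ M : Finset (Sym2 V), M ⊆ E ∧ IsMatchingSet M ∧
      ((α * n ≤ (M.card : ℝ) ∧ (wt M : ℝ) ≤ 4 * α * n) ∨
       ((M.card : ℝ) < α * n ∧ wt M ≤ 3 * M.card ∧ j ≤ M.card)) := by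
    intro j
    induction j with
    | zero =>
      refine ⟨∅, by simp, ⟨by simp, by simp⟩, Or.inr ⟨by simpa using hαn, ?_, by simp⟩⟩
      simp [hwtdef]
    | succ j ih =>
      obtain ⟨M, hMsub, hMmatch, hdisj⟩ := ih
      rcases hdisj with hdone | ⟨hmlt, hw, hj⟩
      · exact ⟨M, hMsub, hMmatch, Or.inl hdone⟩
      obtain ⟨k, hknot, hD1, hD3⟩ := key M hMsub hmlt hw
      set M' := M ∪ D M k with hM'def
      have hDsubCls : D M k ⊆ Cls k := Finset.filter_subset _ _
      have hDsubE : D M k ⊆ E := hDsubCls.trans (Finset.filter_subset _ _)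
      have hDcol : ∀ e ∈ D M k, c e = k := by
        intro e he
        exact (Finset.mem_filter.mp (hDsubCls he)).2
      have hMDdisj : Disjoint M (D M k) := by
        rw [Finset.disjoint_right]
        intro e heD heM
        exact hknot (Finset.mem_image.mpr ⟨e, heM, hDcol e heD⟩)
      have hcard' : M'.card = M.card + (D M k).card := Finset.card_union_of_disjoint hMDdisj
      have hsub' : M' ⊆ E := Finset.union_subset hMsub hDsubE
      have havD : ∀ e ∈ D M k, ∀ f ∈ M, ∀ v : V, v ∈ e → v ∉ f := by
        intro e he
        exact (Finset.mem_filter.mp he).2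
      have hmatch' : IsMatchingSet M' := by
        constructor
        · intro e he
          exact SimpleGraph.not_isDiag_of_mem_edgeSet G
            (SimpleGraph.mem_edgeFinset.mp (hsub' he))
        · intro e he f hf hef v hve hvf
          rcases Finset.mem_union.mp he with heM | heD <;>
            rcases Finset.mem_union.mp hf with hfM | hfD
          · exact hMmatch.2 e heM f hfM hef v hve hvf
          · exact havD f hfD e heM v hvf hve
          · exact havD e heD f hfM v hve hvf
          · exact (hClsMatch k).2 e (hDsubCls heD) f (hDsubCls hfD) hef v hve hvf
      have hwt' : wt M' ≤ wt M + (Cls k).card := by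
        rw [hwtdef]
        have hsubf : E.filter (fun e => c e ∈ M'.image c) ⊆
            E.filter (fun e => c e ∈ M.image c) ∪ Cls k := by
          intro e he
          obtain ⟨heE, heim⟩ := Finset.mem_filter.mp he
          obtain ⟨f, hf, hcf⟩ := Finset.mem_image.mp heim
          rcases Finset.mem_union.mp hf with hfM | hfD
          · exact Finset.mem_union_left _ (Finset.mem_filter.mpr
              ⟨heE, Finset.mem_image.mpr ⟨f, hfM, hcf⟩⟩)
          · refine Finset.mem_union_right _ (Finset.mem_filter.mpr ⟨heE, ?_⟩)
            rw [← hcf]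
            exact hDcol f hfD
        calc (E.filter (fun e => c e ∈ M'.image c)).card
            ≤ (E.filter (fun e => c e ∈ M.image c) ∪ Cls k).card := Finset.card_le_card hsubf
          _ ≤ wt M + (Cls k).card := Finset.card_union_le _ _
      by_cases hbig : α * n ≤ (M'.card : ℝ)
      · refine ⟨M', hsub', hmatch', Or.inl ⟨hbig, ?_⟩⟩
        have h1 : (wt M' : ℝ) ≤ (wt M : ℝ) + (Cls k).card := by exact_mod_cast hwt'
        have h2 : (wt M : ℝ) ≤ 3 * M.card := by
          calc (wt M : ℝ) ≤ ((3 * M.card : ℕ) : ℝ) := by exact_mod_cast hw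
            _ = 3 * M.card := by push_cast; ring
        linarith [hsmall k, hmlt]
      · push_neg at hbig
        refine ⟨M', hsub', hmatch', Or.inr ⟨hbig, ?_, ?_⟩⟩
        · omega
        · omega
  obtain ⟨M, hMsub, hMmatch, hdisj⟩ := main ⌈α * n⌉₊
  rcases hdisj with ⟨hge, hwt4⟩ | ⟨hlt, -, hj⟩
  · refine ⟨(↑(M.image c) : Set ℕ), ⟨M, ?_, ?_, hMmatch, hge⟩, ?_⟩
    · intro e he
      exact SimpleGraph.mem_edgeFinset.mp (hMsub he)
    · intro e he
      exact Finset.mem_coe.mpr (Finset.mem_image_of_mem c he)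
    · have h : ((E.filter (fun e => c e ∈ M.image c)).card : ℝ) ≤ 4 * α * ↑n := hwt4
      convert h using 3
      ext e
      simp
  · exfalso
    have : α * n ≤ (M.card : ℝ) := by
      calc α * n ≤ (⌈α * n⌉₊ : ℝ) := Nat.le_ceil _
        _ ≤ (M.card : ℝ) := by exact_mod_cast hj
    linarith
end

section
/- Let 0 < α ≤ 1/8 and β ≤ α/4. For any properly edge-coloured complete graph K_n, either (i) at least n − 16βn colours are α-rich, or (ii) K_n is (β, βn)-robustly-coloured. -/
open scoped Classical

/-!
If `βn < 1` nothing is deleted, and the `n - 1` edges at any vertex have distinct colours, each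
a one-edge matching.

Otherwise delete `t ≤ βn` rainbow forests: each colour loses at most `t` edges, and at most
`t (n - 1)` edges are lost in all. In a proper colouring every colour class is a matching, so a
colour keeping at least `βn` edges is a `β`-rich class by itself; every `α`-rich colour keeps
that many since `α ≥ 4β`. If there are fewer than `n - 1` such good colours, the other colours
still carry most of the surviving edges: a good colour has at most `n/2` edges if it is `α`-rich
and fewer than `αn ≤ n/8` otherwise, and fewer than `n - 16βn` colours are `α`-rich. The other
colours are grouped greedily: keep adding a colour more than half of whose edges avoid the
current matching, until the matching reaches `⌈βn⌉` edges. Each group uses fewer than `3βn`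
edges, so enough groups are formed.
-/

open Finset SimpleGraph Function

section

variable {V : Type*}

lemma IsMatchingSet.mono {M N : Finset (Sym2 V)} (hM : IsMatchingSet M) (h : N ⊆ M) :
    IsMatchingSet N :=
  ⟨fun e he => hM.1 e (h he), fun e he f hf => hM.2 e (h he) f (h hf)⟩

lemma IsMatchingSet.union {M N : Finset (Sym2 V)} (hM : IsMatchingSet M) (hN : IsMatchingSet N)
    (hMN : ∀ e ∈ M, ∀ f ∈ N, ∀ v ∈ e, v ∉ f) : IsMatchingSet (M ∪ N) := by
  refine ⟨fun e he => (mem_union.1 he).elim (hM.1 e) (hN.1 e), fun e he f hf hef v hve hvf => ?_⟩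
  rcases mem_union.1 he with he | he <;> rcases mem_union.1 hf with hf | hf
  · exact hM.2 e he f hf hef v hve hvf
  · exact hMN e he f hf v hve hvf
  · exact hMN f hf e he v hvf hve
  · exact hN.2 e he f hf hef v hve hvf

lemma IsMatchingSet.two_mul_card_le [Fintype V] {M : Finset (Sym2 V)} (hM : IsMatchingSet M) :
    2 * #M ≤ Fintype.card V := by
  have hdisj : (M : Set (Sym2 V)).PairwiseDisjoint Sym2.toFinset := fun e he f hf hef =>
    disjoint_left.2 fun v hve hvf =>
      hM.2 e he f hf hef v (Sym2.mem_toFinset.1 hve) (Sym2.mem_toFinset.1 hvf)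
  calc 2 * #M = ∑ e ∈ M, #e.toFinset := by
        rw [sum_congr rfl fun e he => Sym2.card_toFinset_of_not_isDiag e (hM.1 e he),
          sum_const, smul_eq_mul, mul_comm]
    _ = #(M.biUnion Sym2.toFinset) := (card_biUnion hdisj).symm
    _ ≤ Fintype.card V := card_le_univ _

lemma RichClass.mono [Fintype V] {G : SimpleGraph V} {c : Sym2 V → ℕ} {β : ℝ} {U U' : Set ℕ}
    (hU : RichClass G c β U) (h : U ⊆ U') : RichClass G c β U' :=
  let ⟨M, hMG, hMU, hM, hcard⟩ := hU
  ⟨M, hMG, fun e he => h (hMU e he), hM, hcard⟩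

lemma ProperColoring.mono {G H : SimpleGraph V} {c : Sym2 V → ℕ} (hG : ProperColoring G c)
    (hH : H ≤ G) : ProperColoring H c :=
  fun _ _ _ hab hab' => hG (hH hab) (hH hab')

lemma SimpleGraph.IsAcyclic.card_edgeFinset_le [Fintype V] {F : SimpleGraph V}
    (hF : F.IsAcyclic) : #F.edgeFinset ≤ Fintype.card V - 1 := by
  rcases isEmpty_or_nonempty V with hV | hV
  · simp [Finset.eq_empty_of_isEmpty F.edgeFinset]
  obtain ⟨T, hFT, -, hT⟩ := connected_top.exists_isTree_le_of_le_of_isAcyclic le_top hF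
  have := hT.card_edgeFinset
  have := card_le_card (edgeFinset_mono hFT)
  omega

lemma card_filter_edgeFinset_le_add [Fintype V] {ι : Type*} [Fintype ι] {G H : SimpleGraph V}
    {F : ι → SimpleGraph V} (hGH : G.edgeSet ⊆ H.edgeSet ∪ ⋃ i, (F i).edgeSet)
    (p : Sym2 V → Prop) [DecidablePred p] :
    #(G.edgeFinset.filter p) ≤ #(H.edgeFinset.filter p) + ∑ i, #((F i).edgeFinset.filter p) := by
  have hsub : G.edgeFinset.filter p ⊆
      H.edgeFinset.filter p ∪ univ.biUnion fun i => (F i).edgeFinset.filter p := by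
    intro e he
    obtain ⟨he, hpe⟩ := mem_filter.1 he
    rcases hGH (mem_edgeFinset.1 he) with hH | hF
    · exact mem_union_left _ (mem_filter.2 ⟨mem_edgeFinset.2 hH, hpe⟩)
    · obtain ⟨i, hi⟩ := Set.mem_iUnion.1 hF
      exact mem_union_right _
        (mem_biUnion.2 ⟨i, mem_univ _, mem_filter.2 ⟨mem_edgeFinset.2 hi, hpe⟩⟩)
  exact (card_le_card hsub).trans ((card_union_le _ _).trans (by gcongr; exact card_biUnion_le))

lemma card_filter_exists_mem_le [Fintype V] (G : SimpleGraph V) (S : Finset V) :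
    #(G.edgeFinset.filter fun e => ∃ v ∈ S, v ∈ e) ≤ #S * (Fintype.card V - 1) := by
  calc #(G.edgeFinset.filter fun e => ∃ v ∈ S, v ∈ e)
      ≤ #(S.biUnion fun v => G.incidenceFinset v) := card_le_card fun e he => by
        obtain ⟨he, v, hv, hve⟩ := mem_filter.1 he
        exact mem_biUnion.2 ⟨v, hv, (mem_incidenceFinset _ _ _).2 ⟨mem_edgeFinset.1 he, hve⟩⟩
    _ ≤ ∑ v ∈ S, #(G.incidenceFinset v) := card_biUnion_le
    _ ≤ #S * (Fintype.card V - 1) := by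
        rw [← smul_eq_mul, ← sum_const]
        refine sum_le_sum fun v _ => ?_
        rw [card_incidenceFinset_eq_degree]
        exact Nat.le_sub_one_of_lt (G.degree_lt_card_verts v)

variable [Fintype V] {G : SimpleGraph V} {c : Sym2 V → ℕ} {β : ℝ}

noncomputable def colourClass (G : SimpleGraph V) (c : Sym2 V → ℕ) (k : ℕ) : Finset (Sym2 V) :=
  G.edgeFinset.filter (c · = k)

noncomputable def colourMass (G : SimpleGraph V) (c : Sym2 V → ℕ) (P : Finset ℕ) : ℕ :=
  ∑ k ∈ P, #(colourClass G c k)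

lemma colourClass_mono {H : SimpleGraph V} (h : H ≤ G) (k : ℕ) :
    colourClass H c k ⊆ colourClass G c k :=
  filter_subset_filter _ (edgeFinset_mono h)

lemma IsRainbow.card_colourClass_le_one (hG : IsRainbow c G.edgeSet) (k : ℕ) :
    #(colourClass G c k) ≤ 1 :=
  card_le_one.2 fun _ he _ hf => by
    simp only [colourClass, mem_filter, mem_edgeFinset] at he hf
    exact hG he.1 hf.1 (he.2.trans hf.2.symm)

lemma colourMass_sdiff_add {P Q : Finset ℕ} (h : Q ⊆ P) :
    colourMass G c (P \ Q) + colourMass G c Q = colourMass G c P :=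
  sum_sdiff h

lemma colourMass_image_edgeFinset (G : SimpleGraph V) (c : Sym2 V → ℕ) :
    colourMass G c (G.edgeFinset.image c) = #G.edgeFinset :=
  (card_eq_sum_card_image c _).symm

lemma mul_colourMass_le {P : Finset ℕ} {a b : ℕ} (h : ∀ k ∈ P, a * #(colourClass G c k) ≤ b) :
    a * colourMass G c P ≤ #P * b := by
  rw [colourMass, mul_sum, ← smul_eq_mul, ← sum_const]
  exact sum_le_sum h

lemma ProperColoring.isMatchingSet_colourClass (hG : ProperColoring G c) (k : ℕ) :
    IsMatchingSet (colourClass G c k) := by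
  refine ⟨fun e he => G.not_isDiag_of_mem_edgeSet (mem_edgeFinset.1 (mem_filter.1 he).1),
    fun e he f hf hef v hve hvf => ?_⟩
  simp only [colourClass, mem_filter, mem_edgeFinset] at he hf
  obtain ⟨a, rfl⟩ := Sym2.mem_iff_exists.1 hve
  obtain ⟨b, rfl⟩ := Sym2.mem_iff_exists.1 hvf
  exact hG he.1 hf.1 (fun hab => hef (by simp only at hab; rw [hab])) (he.2.trans hf.2.symm)

lemma ProperColoring.two_mul_card_colourClass_le (hG : ProperColoring G c) (k : ℕ) :
    2 * #(colourClass G c k) ≤ Fintype.card V :=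
  (hG.isMatchingSet_colourClass k).two_mul_card_le

lemma ProperColoring.richClass_singleton_iff (hG : ProperColoring G c) {k : ℕ} :
    RichClass G c β {k} ↔ β * Fintype.card V ≤ #(colourClass G c k) := by
  refine ⟨fun ⟨M, hMG, hMk, _, hcard⟩ => hcard.trans (Nat.cast_le.2 (card_le_card ?_)),
    fun h => ⟨colourClass G c k, fun e he => ?_, fun e he => ?_,
      hG.isMatchingSet_colourClass k, h⟩⟩
  · exact fun e he => mem_filter.2 ⟨mem_edgeFinset.2 (hMG he), hMk e he⟩
  · exact mem_edgeFinset.1 (mem_filter.1 he).1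
  · exact (mem_filter.1 he).2

lemma wellColoured_of_pairwise_disjoint {ι : Type*} [Fintype ι] (W : ι → Set ℕ)
    (hι : Fintype.card V - 1 ≤ Fintype.card ι) (hW : Pairwise (Disjoint on W))
    (hrich : ∀ i, RichClass G c β (W i)) : WellColoured G c β := by
  obtain ⟨f⟩ := Function.Embedding.nonempty_of_card_le (α := Fin (Fintype.card V - 1))
    (by simpa using hι)
  rcases Nat.eq_zero_or_pos (Fintype.card V - 1) with hn | hn
  · refine ⟨fun _ => ∅, fun i => (Fin.cast hn i).elim0, fun i => (Fin.cast hn i).elim0,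
      fun e he => ?_⟩
    have : Subsingleton V := Fintype.card_le_one_iff_subsingleton.1 (by omega)
    exact (G.not_isDiag_of_mem_edgeSet he (e.ind fun x y => Subsingleton.elim x y)).elim
  -- the first class also absorbs every colour left over by the others
  set i₀ : Fin (Fintype.card V - 1) := ⟨0, hn⟩
  set U : Fin (Fintype.card V - 1) → Set ℕ :=
    fun i => if i = i₀ then (⋃ j ≠ i₀, W (f j))ᶜ else W (f i) with hU
  have hWU : ∀ i, W (f i) ⊆ U i := by
    intro i
    by_cases hi : i = i₀
    · simp only [hU, if_pos hi, Set.subset_compl_iff_disjoint_right, Set.disjoint_iUnion_right]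
      exact fun j hj => hW (f.injective.ne (hi ▸ Ne.symm hj))
    · simp [hU, if_neg hi]
  refine ⟨U, fun i j hij => ?_, fun i => (hrich (f i)).mono (hWU i), fun e _ => ?_⟩
  · rcases eq_or_ne i i₀ with rfl | hi <;> rcases eq_or_ne j i₀ with rfl | hj
    · exact absurd rfl hij
    · simp only [hU, if_pos, if_neg hj]
      exact Set.disjoint_compl_left_iff_subset.2
        (Set.subset_iUnion₂ (s := fun j _ => W (f j)) j hj)
    · simp only [hU, if_pos, if_neg hi]
      exact Set.disjoint_compl_right_iff_subset.2
        (Set.subset_iUnion₂ (s := fun j _ => W (f j)) i hi)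
    · simpa [hU, hi, hj] using hW (f.injective.ne hij)
  · by_cases h : c e ∈ ⋃ j ≠ i₀, W (f j)
    · obtain ⟨j, hj, hcj⟩ := Set.mem_iUnion₂.1 h
      exact ⟨j, hWU j hcj⟩
    · exact ⟨i₀, by simpa [hU] using h⟩

lemma ProperColoring.wellColoured_top (hc : ProperColoring (⊤ : SimpleGraph V) c)
    (hβ : β * Fintype.card V ≤ 1) : WellColoured (⊤ : SimpleGraph V) c β := by
  rcases isEmpty_or_nonempty V with hV | ⟨⟨v⟩⟩
  · exact wellColoured_of_pairwise_disjoint (ι := Empty) (fun _ => ∅) (by simp)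
      (fun i => i.elim) (fun i => i.elim)
  refine wellColoured_of_pairwise_disjoint (ι := {w // w ≠ v}) (fun w => {c s(v, w)})
    (by simp [Fintype.card_subtype_compl]) (fun w w' hww' => ?_) (fun w => ?_)
  · exact Set.disjoint_singleton.2
      (hc ((top_adj _ _).2 w.2.symm) ((top_adj _ _).2 w'.2.symm) (Subtype.coe_injective.ne hww'))
  · refine ⟨{s(v, w)}, by simpa using w.2.symm, by simp, ⟨by simpa using w.2.symm, by simp⟩, ?_⟩
    simpa using hβ

lemma WellColoured.robustlyColoured_zero (hG : WellColoured G c β) : RobustlyColoured G c β 0 :=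
  fun F _ => by simpa using hG

lemma exists_colour_mostly_avoiding (S : Finset V) (P : Finset ℕ)
    (h : 2 * (#S * (Fintype.card V - 1)) < colourMass G c P) :
    ∃ k ∈ P, 2 * #((colourClass G c k).filter fun e => ∃ v ∈ S, v ∈ e) <
      #(colourClass G c k) := by
  by_contra! hP
  have hmass : colourMass G c P ≤ 2 * #(G.edgeFinset.filter fun e => ∃ v ∈ S, v ∈ e) :=
    calc colourMass G c P
        ≤ ∑ k ∈ P, 2 * #((colourClass G c k).filter fun e => ∃ v ∈ S, v ∈ e) := sum_le_sum hP
      _ = 2 * #((G.edgeFinset.filter fun e => ∃ v ∈ S, v ∈ e).filter (c · ∈ P)) := by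
        rw [← mul_sum, ← sum_card_fiberwise_eq_card_filter]
        simp only [colourClass, filter_comm]
      _ ≤ 2 * #(G.edgeFinset.filter fun e => ∃ v ∈ S, v ∈ e) := by
        gcongr
        exact filter_subset _ _
  have := card_filter_exists_mem_le G S
  omega

lemma ProperColoring.exists_colourClass_extending_matching (hG : ProperColoring G c)
    {M : Finset (Sym2 V)} (hM : IsMatchingSet M) (P : Finset ℕ)
    (h : 4 * #M * (Fintype.card V - 1) < colourMass G c P) :
    ∃ k ∈ P, ∃ Φ ⊆ colourClass G c k, IsMatchingSet (M ∪ Φ) ∧ Disjoint M Φ ∧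
      #(colourClass G c k) < 2 * #Φ := by
  set S := M.biUnion Sym2.toFinset
  have hS : #S ≤ 2 * #M := card_biUnion_le.trans <| by
    rw [mul_comm, ← smul_eq_mul, ← sum_const]
    exact sum_le_sum fun e _ => by rw [Sym2.card_toFinset]; split_ifs <;> omega
  have hSM : 2 * (#S * (Fintype.card V - 1)) < colourMass G c P := by
    have := Nat.mul_le_mul_right (Fintype.card V - 1) hS
    linarith
  obtain ⟨k, hk, hkS⟩ := exists_colour_mostly_avoiding S P hSM
  have hMS : ∀ e ∈ M, ∀ v ∈ e, v ∈ S := fun e he v hv =>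
    mem_biUnion.2 ⟨e, he, Sym2.mem_toFinset.2 hv⟩
  refine ⟨k, hk, (colourClass G c k).filter fun e => ¬∃ v ∈ S, v ∈ e, filter_subset _ _,
    hM.union ((hG.isMatchingSet_colourClass k).mono (filter_subset _ _)) ?_, ?_, ?_⟩
  · exact fun e he f hf v hve hvf => (mem_filter.1 hf).2 ⟨v, hMS e he v hve, hvf⟩
  · exact disjoint_left.2 fun e he he' =>
      (mem_filter.1 he').2 ⟨_, hMS e he _ (Sym2.out_fst_mem e), Sym2.out_fst_mem e⟩
  · have := card_filter_add_card_filter_not (s := colourClass G c k) fun e => ∃ v ∈ S, v ∈ e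
    omega

lemma ProperColoring.exists_richClass_of_partial (hG : ProperColoring G c) {m : ℕ}
    (hm : β * Fintype.card V ≤ m) {P : Finset ℕ} (hP : ∀ k ∈ P, #(colourClass G c k) < m)
    (hmass : 4 * (m - 1) * (Fintype.card V - 1) + 2 * (m - 1) < colourMass G c P)
    {C : Finset ℕ} {M : Finset (Sym2 V)} (hCP : C ⊆ P) (hMG : ↑M ⊆ G.edgeSet)
    (hMC : ∀ e ∈ M, c e ∈ C) (hM : IsMatchingSet M) (hMm : #M < m)
    (hCM : colourMass G c C ≤ 2 * #M) :
    ∃ C' ⊆ P, colourMass G c C' ≤ 3 * (m - 1) ∧ RichClass G c β C' := by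
  induction hd : m - #M using Nat.strong_induction_on generalizing C M with
  | _ d ih =>
  have hPC : 4 * #M * (Fintype.card V - 1) < colourMass G c (P \ C) := by
    have := colourMass_sdiff_add (G := G) (c := c) hCP
    have : 4 * #M * (Fintype.card V - 1) ≤ 4 * (m - 1) * (Fintype.card V - 1) := by
      gcongr; omega
    omega
  obtain ⟨k, hk, Φ, hΦk, hMΦ, hdisj, hΦ⟩ :=
    hG.exists_colourClass_extending_matching hM (P \ C) hPC
  obtain ⟨hkP, hkC⟩ := mem_sdiff.1 hk
  have hmassC : colourMass G c (insert k C) = #(colourClass G c k) + colourMass G c C :=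
    sum_insert hkC
  have hcard : #(M ∪ Φ) = #M + #Φ := card_union_of_disjoint hdisj
  have hMG' : ↑(M ∪ Φ) ⊆ G.edgeSet := by
    rw [coe_union]
    exact Set.union_subset hMG fun e he => mem_edgeFinset.1 (mem_filter.1 (hΦk he)).1
  have hMC' : ∀ e ∈ M ∪ Φ, c e ∈ insert k C := fun e he =>
    (mem_union.1 he).elim (fun he => mem_insert_of_mem (hMC e he))
      fun he => (mem_filter.1 (hΦk he)).2 ▸ mem_insert_self _ _
  -- more than half of the new colour's edges join the matching, so `colourMass C ≤ 2 * #M`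
  -- survives; the colour completing the matching adds fewer than `m` edges to the mass
  by_cases hm' : m ≤ #(M ∪ Φ)
  · have := hP k hkP
    exact ⟨insert k C, insert_subset hkP hCP, by omega,
      ⟨M ∪ Φ, hMG', hMC', hMΦ, hm.trans (by exact_mod_cast hm')⟩⟩
  · exact ih _ (by omega) (insert_subset hkP hCP) hMG' hMC' hMΦ (by omega) (by omega) rfl

lemma ProperColoring.exists_richClass_of_colourMass (hG : ProperColoring G c) {m : ℕ}
    (hm : β * Fintype.card V ≤ m) {P : Finset ℕ} (hP : ∀ k ∈ P, #(colourClass G c k) < m)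
    (hmass : 4 * (m - 1) * (Fintype.card V - 1) + 2 * (m - 1) < colourMass G c P) :
    ∃ C ⊆ P, colourMass G c C ≤ 3 * (m - 1) ∧ RichClass G c β C := by
  obtain ⟨k, hk, -⟩ := exists_ne_zero_of_sum_ne_zero (s := P)
    (f := fun k => #(colourClass G c k)) (by unfold colourMass at hmass; omega)
  have := hP k hk
  exact hG.exists_richClass_of_partial hm hP hmass (C := ∅) (M := ∅) (empty_subset _) (by simp)
    (by simp)
    ⟨by simp, by simp⟩ (by simp; omega) (by simp [colourMass])

lemma ProperColoring.exists_pairwise_disjoint_richClass (hG : ProperColoring G c) {m : ℕ}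
    (hm : β * Fintype.card V ≤ m) (q : ℕ) {P : Finset ℕ}
    (hP : ∀ k ∈ P, #(colourClass G c k) < m)
    (hmass : 3 * (m - 1) * q + 4 * (m - 1) * (Fintype.card V - 1) + 2 * (m - 1) <
      colourMass G c P) :
    ∃ C : Fin q → Finset ℕ, (∀ i, C i ⊆ P) ∧ Pairwise (Disjoint on C) ∧
      ∀ i, RichClass G c β (C i) := by
  induction q generalizing P with
  | zero => exact ⟨Fin.elim0, fun i => i.elim0, fun i => i.elim0, fun i => i.elim0⟩
  | succ q ih =>
  obtain ⟨C₀, hC₀P, hC₀mass, hC₀⟩ := hG.exists_richClass_of_colourMass hm hP (by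
    have : 0 ≤ 3 * (m - 1) * q := Nat.zero_le _
    linarith)
  obtain ⟨C, hCP, hC, hCrich⟩ := ih (P := P \ C₀) (fun k hk => hP k (mem_sdiff.1 hk).1) (by
    have := colourMass_sdiff_add (G := G) (c := c) hC₀P
    have : 3 * (m - 1) * (q + 1) = 3 * (m - 1) * q + 3 * (m - 1) := by ring
    omega)
  refine ⟨Fin.cons C₀ C, Fin.cases hC₀P fun i => (hCP i).trans sdiff_subset, ?_,
    Fin.cases hC₀ hCrich⟩
  refine pairwise_fin_succ_iff_of_isSymm.2 ⟨fun j => ?_, fun i j hij => hC hij⟩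
  exact disjoint_left.2 fun k hk hk' => (mem_sdiff.1 (hCP j hk')).2 hk

lemma ProperColoring.lt_colourMass_sdiff (hG : ProperColoring G c) (hβ : 24 * β ≤ 1)
    (hβn : 1 ≤ β * Fintype.card V) {R P : Finset ℕ} (hRP : R ⊆ P)
    (hPK : P ⊆ G.edgeFinset.image c) (hP : #P ≤ Fintype.card V - 1)
    (hR : #R + 16 * β * Fintype.card V < Fintype.card V)
    (hE : Fintype.card V * (Fintype.card V - 1 : ℝ) / 2 -
      β * Fintype.card V * (Fintype.card V - 1) ≤ #G.edgeFinset)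
    (hpoor : ∀ k ∉ R, 8 * #(colourClass G c k) ≤ Fintype.card V) :
    3 * (⌈β * Fintype.card V⌉₊ - 1) * (Fintype.card V - 1 - #P) +
      4 * (⌈β * Fintype.card V⌉₊ - 1) * (Fintype.card V - 1) + 2 * (⌈β * Fintype.card V⌉₊ - 1) <
      colourMass G c (G.edgeFinset.image c \ P) := by
  set n := Fintype.card V
  set m := ⌈β * n⌉₊
  have hm : 1 ≤ m := Nat.one_le_ceil_iff.2 (by linarith)
  have hβn' : 24 * (β * n) ≤ n := by nlinarith [(Nat.cast_nonneg n : (0 : ℝ) ≤ n)]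
  have hn : 1 ≤ n := Nat.one_le_cast (α := ℝ).1 (by linarith)
  have hmb : (m : ℝ) - 1 ≤ β * n := by linarith [Nat.ceil_lt_add_one (by linarith : 0 ≤ β * n)]
  have hmass := colourMass_sdiff_add (G := G) (c := c) hPK
  have hmassP := colourMass_sdiff_add (G := G) (c := c) hRP
  rw [colourMass_image_edgeFinset] at hmass
  have hmassR := mul_colourMass_le (G := G) (c := c) (P := R) fun k _ =>
    hG.two_mul_card_colourClass_le k
  have hmassPR := mul_colourMass_le (G := G) (c := c) (P := P \ R) fun k hk =>
    hpoor k (mem_sdiff.1 hk).2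
  have hT : (n : ℝ) * (n - 1) / 2 - β * n * (n - 1) - #R * n / 2 - #(P \ R) * n / 8 ≤
      colourMass G c (G.edgeFinset.image c \ P) := by
    have := congrArg (Nat.cast (R := ℝ)) hmass
    have := congrArg (Nat.cast (R := ℝ)) hmassP
    have : (2 : ℝ) * colourMass G c R ≤ #R * n := by exact_mod_cast hmassR
    have : (8 : ℝ) * colourMass G c (P \ R) ≤ #(P \ R) * n := by exact_mod_cast hmassPR
    push_cast at *
    linarith
  have hq : ((n - 1 - #P : ℕ) : ℝ) + #(P \ R) + #R + 1 = n := by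
    rw [← card_sdiff_add_card_eq_card hRP] at hP ⊢
    push_cast [Nat.cast_sub hn, Nat.cast_sub hP]
    ring
  have hq0 : (0 : ℝ) ≤ ((n - 1 - #P : ℕ) : ℝ) := Nat.cast_nonneg _
  generalize n - 1 - #P = q at hq hq0 ⊢
  rw [← Nat.cast_lt (α := ℝ)]
  push_cast [Nat.cast_sub hm, Nat.cast_sub hn]
  nlinarith [mul_le_mul_of_nonneg_right hmb hq0, mul_le_mul_of_nonneg_right hβn' hq0,
    mul_le_mul_of_nonneg_right hmb (by linarith : (0 : ℝ) ≤ n - 1),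
    mul_lt_mul_of_pos_left hR (by linarith : (0 : ℝ) < n)]

lemma ProperColoring.wellColoured_of_le_card_edgeFinset (hG : ProperColoring G c)
    (hβ : 24 * β ≤ 1) (hβn : 1 ≤ β * Fintype.card V) (R : Finset ℕ)
    (hR : #R + 16 * β * Fintype.card V < Fintype.card V)
    (hE : Fintype.card V * (Fintype.card V - 1 : ℝ) / 2 -
      β * Fintype.card V * (Fintype.card V - 1) ≤ #G.edgeFinset)
    (hRdeg : ∀ k ∈ R, β * Fintype.card V ≤ #(colourClass G c k))
    (hpoor : ∀ k ∉ R, 8 * #(colourClass G c k) ≤ Fintype.card V) : WellColoured G c β := by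
  set n := Fintype.card V
  set good := (G.edgeFinset.image c).filter fun k => β * n ≤ #(colourClass G c k)
  have hgood : ∀ k ∈ good, RichClass G c β {k} := fun k hk =>
    hG.richClass_singleton_iff.2 (mem_filter.1 hk).2
  have hsingle : Pairwise (Disjoint on fun k : good => ({k.1} : Set ℕ)) := fun k k' h =>
    Set.disjoint_singleton.2 (Subtype.coe_injective.ne h)
  by_cases hn : n - 1 ≤ #good
  · exact wellColoured_of_pairwise_disjoint _ (by simpa using hn) hsingle fun k => hgood k k.2
  have hRgood : R ⊆ good := fun k hk => by
    have hk := hRdeg k hk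
    obtain ⟨e, he⟩ := card_pos.1 ((Nat.cast_pos (α := ℝ)).1 (by linarith))
    exact mem_filter.2 ⟨mem_image.2 ⟨e, (mem_filter.1 he).1, (mem_filter.1 he).2⟩, hk⟩
  have htiny : ∀ k ∈ G.edgeFinset.image c \ good, #(colourClass G c k) < ⌈β * n⌉₊ :=
    fun k hk => Nat.lt_ceil.2 <| not_le.1 fun h =>
      (mem_sdiff.1 hk).2 (mem_filter.2 ⟨(mem_sdiff.1 hk).1, h⟩)
  obtain ⟨C, hCtiny, hC, hCrich⟩ := hG.exists_pairwise_disjoint_richClass (Nat.le_ceil _)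
    (n - 1 - #good) htiny
    (hG.lt_colourMass_sdiff hβ hβn hRgood (filter_subset _ _) (by omega) hR hE hpoor)
  refine wellColoured_of_pairwise_disjoint (Sum.elim (fun k : good => ({k.1} : Set ℕ))
    fun i => C i) (by simp; omega) ?_ (Sum.rec (fun k => hgood k k.2) hCrich)
  rintro (k | i) (k' | i') h
  · exact hsingle (by simpa using h)
  · exact Set.disjoint_singleton_left.2 fun hk => (mem_sdiff.1 (hCtiny i' hk)).2 k.2
  · exact Set.disjoint_singleton_right.2 fun hk => (mem_sdiff.1 (hCtiny i hk)).2 k'.2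
  · exact Finset.disjoint_coe.2 (hC (by simpa using h))

lemma card_colourClass_le_add_of_subset_union {H : SimpleGraph V} {t : ℕ}
    {F : Fin t → SimpleGraph V} (hGF : H.edgeSet ⊆ G.edgeSet ∪ ⋃ i, (F i).edgeSet)
    (hF : ∀ i, IsRainbow c (F i).edgeSet) (k : ℕ) :
    #(colourClass H c k) ≤ #(colourClass G c k) + t := by
  have hF1 : ∑ i, #(colourClass (F i) c k) ≤ t :=
    (sum_le_sum fun i _ => (hF i).card_colourClass_le_one k).trans (by simp)
  exact (card_filter_edgeFinset_le_add hGF (c · = k)).trans (Nat.add_le_add_left hF1 _)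

lemma card_edgeFinset_le_add_of_subset_union {H : SimpleGraph V} {t : ℕ}
    {F : Fin t → SimpleGraph V} (hGF : H.edgeSet ⊆ G.edgeSet ∪ ⋃ i, (F i).edgeSet)
    (hF : ∀ i, (F i).IsAcyclic) :
    #H.edgeFinset ≤ #G.edgeFinset + t * (Fintype.card V - 1) := by
  have hF1 : ∑ i, #(F i).edgeFinset ≤ t * (Fintype.card V - 1) :=
    (sum_le_sum fun i _ => (hF i).card_edgeFinset_le).trans (by simp)
  have := card_filter_edgeFinset_le_add hGF fun _ => True
  simp only [filter_true] at this
  exact this.trans (Nat.add_le_add_left hF1 _)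

noncomputable def richColours (c : Sym2 V → ℕ) (α : ℝ) : Finset ℕ :=
  (univ.image c).filter fun k => RichClass (⊤ : SimpleGraph V) c α {k}

lemma ProperColoring.wellColoured_of_subset_union_forests {α : ℝ}
    (hc : ProperColoring (⊤ : SimpleGraph V) c) (hα : α ≤ 1 / 8) (hβ : β ≤ α / 4)
    (hβn : 1 ≤ β * Fintype.card V)
    (hR : #(richColours c α) + 16 * β * Fintype.card V < Fintype.card V)
    {t : ℕ} (ht : (t : ℝ) ≤ β * Fintype.card V) {F : Fin t → SimpleGraph V}
    (hF : ∀ i, (F i).IsAcyclic ∧ IsRainbow c (F i).edgeSet)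
    (hGF : (⊤ : SimpleGraph V).edgeSet ⊆ G.edgeSet ∪ ⋃ i, (F i).edgeSet) :
    WellColoured G c β := by
  have hn : 1 ≤ Fintype.card V := Nat.one_le_cast (α := ℝ).1 (by nlinarith)
  refine (hc.mono le_top).wellColoured_of_le_card_edgeFinset (by linarith) hβn (richColours c α)
    hR ?_ (fun k hk => ?_) (fun k hk => ?_)
  · have hE : (Fintype.card V).choose 2 ≤ #G.edgeFinset + t * (Fintype.card V - 1) := by
      refine (le_of_eq ?_).trans (card_edgeFinset_le_add_of_subset_union hGF fun i => (hF i).1)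
      rw [← card_edgeFinset_top_eq_card_choose_two]
      convert rfl
    have hE' : ((Fintype.card V).choose 2 : ℝ) ≤
        #G.edgeFinset + t * (Fintype.card V - 1 : ℕ) := by
      exact_mod_cast hE
    rw [Nat.cast_choose_two, Nat.cast_sub hn, Nat.cast_one] at hE'
    nlinarith [mul_le_mul_of_nonneg_right ht (by simpa using hn : (0 : ℝ) ≤ Fintype.card V - 1)]
  · have hrich := hc.richClass_singleton_iff.1 (mem_filter.1 hk).2
    have hloss : (#(colourClass ⊤ c k) : ℝ) ≤ #(colourClass G c k) + t := by
      exact_mod_cast card_colourClass_le_add_of_subset_union hGF (fun i => (hF i).2) k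
    nlinarith
  · by_contra! h
    have hGk := card_le_card (colourClass_mono (c := c) (le_top : G ≤ ⊤) k)
    obtain ⟨e, he⟩ := card_pos.1 (by omega : 0 < #(colourClass ⊤ c k))
    have hpoor : ¬ α * Fintype.card V ≤ #(colourClass ⊤ c k) := fun hα' =>
      hk (mem_filter.2 ⟨mem_image.2 ⟨e, mem_univ _, (mem_filter.1 he).2⟩,
        hc.richClass_singleton_iff.2 hα'⟩)
    have : (Fintype.card V : ℝ) < 8 * #(colourClass ⊤ c k) := by
      exact_mod_cast h.trans_le (by omega)
    nlinarith

end

theorem stmt3_general {V : Type*} [Fintype V] (c : Sym2 V → ℕ)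
    (α β : ℝ) (hα' : α ≤ 1 / 8) (hβ : β ≤ α / 4)
    (hproper : ProperColoring (⊤ : SimpleGraph V) c) :
    (∃ S : Finset ℕ, (∀ k ∈ S, RichClass (⊤ : SimpleGraph V) c α {k}) ∧
        (Fintype.card V : ℝ) - 16 * β * (Fintype.card V : ℝ) ≤ (S.card : ℝ)) ∨
    RobustlyColoured (⊤ : SimpleGraph V) c β ⌊β * (Fintype.card V : ℝ)⌋₊ := by
  rcases lt_or_ge (β * Fintype.card V) 1 with hβn | hβn
  · right
    rw [Nat.floor_eq_zero.2 hβn]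
    exact (hproper.wellColoured_top hβn.le).robustlyColoured_zero
  by_cases hR : (Fintype.card V : ℝ) - 16 * β * Fintype.card V ≤ #(richColours c α)
  · exact Or.inl ⟨richColours c α, fun k hk => (mem_filter.1 hk).2, hR⟩
  right
  intro F hF
  exact hproper.wellColoured_of_subset_union_forests hα' hβ hβn (by linarith)
    (Nat.floor_le (by linarith)) (fun i => (hF i).2)
    (edgeSet_deleteEdges _ ▸ Set.subset_sdiff_union _ _)

theorem stmt3 {V : Type*} [Fintype V] [DecidableEq V] (c : Sym2 V → ℕ)
    (α β : ℝ) (hα : 0 < α) (hα' : α ≤ 1 / 8) (hβ : β ≤ α / 4)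
    (hproper : ProperColoring (⊤ : SimpleGraph V) c) :
    (∃ S : Finset ℕ, (∀ k ∈ S, RichClass (⊤ : SimpleGraph V) c α {k}) ∧
        (Fintype.card V : ℝ) - 16 * β * (Fintype.card V : ℝ) ≤ (S.card : ℝ)) ∨
    RobustlyColoured (⊤ : SimpleGraph V) c β ⌊β * (Fintype.card V : ℝ)⌋₊ :=
  stmt3_general c α β hα' hβ hproper
end

section
/- Let 0 < β ≤ α ≤ 1/15 and n ≥ 1/α². Let G be a 6α-well-coloured properly edge-coloured n-vertex graph with minimum degree at least 3βn, and let A ⊆ V(G) with |A| ≤ βn and δ(G − A) ≥ (1−α)n. Then G contains a rainbow spanning tree of maximum degree at most (1−α)n in which every vertex of A is a leaf. -/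
open scoped Classical

/-!
Choose `k = ⌈α n⌉` and enlarge `A` to a set `P` of `k` vertices, each joined by a pendant edge
to its own partner outside `P`, all `k` pendant edges of distinct colours; a proper colouring
makes this greedy choice possible. It remains to find a rainbow spanning tree of `G - P` that
avoids the `k` pendant colours. By Rado's theorem for the graphic matroid, this holds if for
every set `D` of further forbidden colours the remaining edges have rank at least
`n - k - 1 - |D|`. For small `D` this follows from the minimum degree of `G - A`; for large
`D` some `6α`-rich colour class avoids all forbidden colours, and its matching alone has
enough edges outside `P`. The vertices of `P` are leaves, so all degrees are at most `n - k`.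
-/

namespace RainbowTree

open Finset SimpleGraph

section Components

variable {V : Type*}

def spanned (S : Finset (Sym2 V)) : SimpleGraph V :=
  fromEdgeSet S

noncomputable def numComponents (S : Finset (Sym2 V)) : ℕ :=
  Nat.card (spanned S).ConnectedComponent

variable {S T F F₀ : Finset (Sym2 V)} {x y u v : V}

@[simp]
lemma spanned_adj : (spanned S).Adj u v ↔ s(u, v) ∈ S ∧ u ≠ v := by
  simp [spanned]

lemma spanned_mono (h : S ⊆ T) : spanned S ≤ spanned T :=
  fromEdgeSet_mono (by exact_mod_cast h)

lemma reachable_of_forall_adj {G H : SimpleGraph V} (h : ∀ a b, H.Adj a b → G.Reachable a b)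
    (hr : H.Reachable u v) : G.Reachable u v := by
  obtain ⟨w⟩ := hr
  induction w with
  | nil => rfl
  | cons hab _ ih => exact (h _ _ hab).trans ih

lemma eq_of_reachable_of_isolated (h : ∀ e ∈ S, u ∉ e) (hr : (spanned S).Reachable u v) :
    u = v := by
  obtain ⟨w⟩ := hr
  cases w with
  | nil => rfl
  | cons ha _ => exact absurd (Sym2.mem_mk_left _ _) (h _ (spanned_adj.1 ha).1)

lemma numComponents_empty : numComponents (∅ : Finset (Sym2 V)) = Nat.card V := by
  refine (Nat.card_eq_of_bijective _ ⟨fun a b hab => ?_, Quot.mk_surjective⟩).symm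
  simpa [spanned] using ConnectedComponent.exact hab

lemma numComponents_eq_of_reachable (hST : S ⊆ T)
    (h : ∀ a b, s(a, b) ∈ T → (spanned S).Reachable a b) :
    numComponents T = numComponents S := by
  refine (Nat.card_eq_of_bijective (ConnectedComponent.map (Hom.ofLE (spanned_mono hST)))
    ⟨fun C D hCD => ?_, ConnectedComponent.surjective_map_ofLE _⟩).symm
  induction C using ConnectedComponent.ind
  induction D using ConnectedComponent.ind
  simp only [ConnectedComponent.map_mk, ConnectedComponent.eq] at hCD ⊢
  exact reachable_of_forall_adj (fun a b hab => h a b (spanned_adj.1 hab).1) hCD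

lemma numComponents_antitone [Finite V] (h : S ⊆ T) : numComponents T ≤ numComponents S :=
  ConnectedComponent.card_le_card_of_le (spanned_mono h)

lemma numComponents_le_card [Finite V] : numComponents S ≤ Nat.card V :=
  Nat.card_le_card_of_surjective _ Quot.mk_surjective

variable [DecidableEq V]

lemma reachable_insert_cases (hr : (spanned (insert s(x, y) S)).Reachable u v) :
    (spanned S).Reachable u v ∨ ((spanned S).Reachable u x ∧ (spanned S).Reachable y v)
      ∨ ((spanned S).Reachable u y ∧ (spanned S).Reachable x v) := by
  obtain ⟨w⟩ := hr
  induction w with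
  | nil => exact .inl .rfl
  | @cons a b _ hab _ ih =>
    obtain ⟨hmem | hmem, hne⟩ : (s(a, b) = s(x, y) ∨ s(a, b) ∈ S) ∧ a ≠ b := by
      simpa using hab
    · obtain ⟨rfl, rfl⟩ | ⟨rfl, rfl⟩ := Sym2.eq_iff.1 hmem <;>
        rcases ih with h | ⟨-, h⟩ | ⟨-, h⟩ <;> simp_all
    · have hab : (spanned S).Reachable a b := (spanned_adj.2 ⟨hmem, hne⟩).reachable
      rcases ih with h | ⟨h₁, h₂⟩ | ⟨h₁, h₂⟩
      · exact .inl (hab.trans h)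
      · exact .inr (.inl ⟨hab.trans h₁, h₂⟩)
      · exact .inr (.inr ⟨hab.trans h₁, h₂⟩)

lemma numComponents_insert_of_reachable (hxy : (spanned S).Reachable x y) :
    numComponents (insert s(x, y) S) = numComponents S := by
  refine numComponents_eq_of_reachable (subset_insert _ _) fun a b hab => ?_
  obtain hab | hab := mem_insert.1 hab
  · obtain ⟨rfl, rfl⟩ | ⟨rfl, rfl⟩ := Sym2.eq_iff.1 hab
    exacts [hxy, hxy.symm]
  · obtain rfl | hne := eq_or_ne a b
    exacts [.rfl, (spanned_adj.2 ⟨hab, hne⟩).reachable]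

variable [Finite V]

lemma numComponents_insert_of_not_reachable (hxy : ¬ (spanned S).Reachable x y) :
    numComponents (insert s(x, y) S) + 1 = numComponents S := by
  set φ := ConnectedComponent.map (Hom.ofLE (spanned_mono (subset_insert s(x, y) S)))
  set c₀ := (spanned S).connectedComponentMk y
  have hinj : Set.InjOn φ (Set.univ \ {c₀}) := by
    intro C hC D hD hCD
    induction C using ConnectedComponent.ind with | _ u =>
    induction D using ConnectedComponent.ind with | _ v =>
    simp only [φ, ConnectedComponent.map_mk, ConnectedComponent.eq] at hCD
    rcases reachable_insert_cases hCD with h | ⟨-, h⟩ | ⟨h, -⟩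
    · exact ConnectedComponent.sound h
    · exact absurd (ConnectedComponent.sound h.symm) hD.2
    · exact absurd (ConnectedComponent.sound h) hC.2
  have hsurj : φ '' (Set.univ \ {c₀}) = Set.univ := by
    refine Set.eq_univ_of_forall fun C => ?_
    induction C using ConnectedComponent.ind with | _ v =>
    by_cases hv : (spanned S).connectedComponentMk v = c₀
    · refine ⟨(spanned S).connectedComponentMk x,
        ⟨trivial, fun h => hxy (ConnectedComponent.exact h)⟩, ?_⟩
      have hx : (spanned (insert s(x, y) S)).Reachable x y :=
        (spanned_adj.2 ⟨mem_insert_self _ _, by rintro rfl; exact hxy .rfl⟩).reachable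
      simp only [φ, ConnectedComponent.map_mk, ConnectedComponent.eq]
      exact hx.trans ((ConnectedComponent.exact hv).mono (spanned_mono (subset_insert _ _))).symm
    · exact ⟨_, ⟨trivial, hv⟩, rfl⟩
  rw [numComponents, numComponents, ← Set.ncard_univ, ← hsurj, hinj.ncard_image,
    Set.ncard_sdiff_singleton_add_one (Set.mem_univ _), Set.ncard_univ]

lemma numComponents_le_insert (e : Sym2 V) :
    numComponents S ≤ numComponents (insert e S) + 1 := by
  induction e using Sym2.ind with | _ x y =>
  by_cases hxy : (spanned S).Reachable x y
  · rw [numComponents_insert_of_reachable hxy]; omega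
  · rw [numComponents_insert_of_not_reachable hxy]

lemma numComponents_le_union_add_card (S T : Finset (Sym2 V)) :
    numComponents S ≤ numComponents (S ∪ T) + T.card := by
  induction T using Finset.induction with
  | empty => simp
  | @insert e T he ih =>
    rw [union_insert, card_insert_of_notMem he]
    have := numComponents_le_insert (S := S ∪ T) e
    omega

lemma card_le_numComponents_add_card (S : Finset (Sym2 V)) :
    Nat.card V ≤ numComponents S + S.card := by
  simpa [numComponents_empty] using numComponents_le_union_add_card ∅ S

/-- Independence in the graphic matroid, through its rank function
`S ↦ card V - numComponents S`. -/
def IsForest (S : Finset (Sym2 V)) : Prop :=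
  numComponents S + S.card = Nat.card V

omit [DecidableEq V] [Finite V] in
lemma isForest_empty : IsForest (∅ : Finset (Sym2 V)) := by
  simp [IsForest, numComponents_empty]

lemma IsForest.subset (hS : IsForest S) (hTS : T ⊆ S) : IsForest T := by
  have h₁ := card_le_numComponents_add_card T
  have h₂ := numComponents_le_union_add_card T (S \ T)
  rw [union_sdiff_of_subset hTS, card_sdiff_of_subset hTS] at h₂
  have := card_le_card hTS
  unfold IsForest at hS ⊢
  omega

lemma IsForest.insert (hS : IsForest S) (hxy : ¬ (spanned S).Reachable x y) :
    IsForest (insert s(x, y) S) := by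
  have hne : x ≠ y := by rintro rfl; exact hxy .rfl
  have hmem : s(x, y) ∉ S := fun h => hxy (spanned_adj.2 ⟨h, hne⟩).reachable
  have := numComponents_insert_of_not_reachable hxy
  unfold IsForest at hS ⊢
  rw [card_insert_of_notMem hmem]
  omega

omit [DecidableEq V] in
lemma IsForest.card_add_numComponents_le (hF : IsForest F) (hFS : F ⊆ S) :
    F.card + numComponents S ≤ Nat.card V := by
  have := numComponents_antitone hFS
  unfold IsForest at hF
  omega

lemma IsForest.not_isDiag (hS : IsForest S) {e : Sym2 V} (he : e ∈ S) : ¬ e.IsDiag := by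
  induction e using Sym2.ind with | _ x y =>
  rintro (rfl : x = y)
  have h := card_le_numComponents_add_card (S.erase s(x, x))
  rw [← numComponents_insert_of_reachable (S := S.erase s(x, x)) .rfl, insert_erase he,
    card_erase_of_mem he] at h
  have := card_pos.2 ⟨_, he⟩
  unfold IsForest at hS
  omega

lemma exists_isForest_numComponents_eq (h₀ : IsForest F₀) (hF₀S : F₀ ⊆ S) :
    ∃ F, F₀ ⊆ F ∧ F ⊆ S ∧ IsForest F ∧ numComponents F = numComponents S := by
  obtain ⟨F, hF, hmax⟩ := (S.powerset.filter fun F => F₀ ⊆ F ∧ IsForest F).exists_max_image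
    card ⟨F₀, by simpa using ⟨hF₀S, h₀⟩⟩
  simp only [mem_filter, mem_powerset] at hF hmax
  obtain ⟨hFS, hF₀F, hFforest⟩ := hF
  refine ⟨F, hF₀F, hFS, hFforest, le_antisymm ?_ (numComponents_antitone hFS)⟩
  suffices h : ∀ a b, s(a, b) ∈ S → (spanned F).Reachable a b by
    rw [← numComponents_eq_of_reachable hFS h]
  by_contra! ⟨a, b, hab, hnr⟩
  have hmem : s(a, b) ∉ F := fun h =>
    hnr (spanned_adj.2 ⟨h, by rintro rfl; exact hnr .rfl⟩).reachable
  have := hmax _ ⟨insert_subset hab hFS, hF₀F.trans (subset_insert _ _), hFforest.insert hnr⟩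
  rw [card_insert_of_notMem hmem] at this
  omega

/-- Submodularity of the graphic rank: a spanning forest of `S ∪ T` extending one of `S ∩ T`
restricts to forests in `S` and in `T`. -/
lemma numComponents_add_numComponents_le (S T : Finset (Sym2 V)) :
    numComponents S + numComponents T ≤ numComponents (S ∪ T) + numComponents (S ∩ T) := by
  obtain ⟨F₀, -, hF₀, hF₀forest, hF₀comp⟩ :=
    exists_isForest_numComponents_eq isForest_empty (empty_subset (S ∩ T))
  obtain ⟨F, hF₀F, hF, hFforest, hFcomp⟩ :=
    exists_isForest_numComponents_eq hF₀forest (hF₀.trans inter_subset_union)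
  have hS := (hFforest.subset (inter_subset_left (s₂ := S))).card_add_numComponents_le
    inter_subset_right
  have hT := (hFforest.subset (inter_subset_left (s₂ := T))).card_add_numComponents_le
    inter_subset_right
  have hST : (F ∩ S).card + (F ∩ T).card = F.card + (F ∩ (S ∩ T)).card := by
    rw [← card_union_add_card_inter, ← inter_union_distrib_left, inter_eq_left.2 hF,
      ← inter_inter_distrib_left]
  have h₀ := card_le_card (subset_inter hF₀F hF₀)
  unfold IsForest at hF₀forest hFforest
  omega

section Rado

variable {κ : Type*} [DecidableEq κ]

/-- Rado's condition for the existence of a rainbow forest with `N` edges. -/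
def RadoCondition (col : Sym2 V → κ) (N : ℕ) (E : Finset (Sym2 V)) : Prop :=
  ∀ D : Finset κ, N + numComponents (E.filter fun e => col e ∉ D) ≤ Nat.card V + D.card

variable {col : Sym2 V → κ} {N : ℕ} {E : Finset (Sym2 V)}

/-- Rado's reduction step: if both deletions violated the condition, at colour sets `D₁` and
`D₂`, supermodularity of `numComponents` would contradict the condition for `E` at `D₁ ∩ D₂`
and at `insert (col e₁) (D₁ ∪ D₂)`. -/
lemma RadoCondition.erase_or_erase (h : RadoCondition col N E) {e₁ e₂ : Sym2 V}
    (he₁ : e₁ ∈ E) (he₂ : e₂ ∈ E) (hne : e₁ ≠ e₂) (hcol : col e₁ = col e₂) :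
    RadoCondition col N (E.erase e₁) ∨ RadoCondition col N (E.erase e₂) := by
  by_contra! ⟨h₁, h₂⟩
  simp only [RadoCondition, not_forall, not_le] at h₁ h₂
  obtain ⟨D₁, hD₁⟩ := h₁
  obtain ⟨D₂, hD₂⟩ := h₂
  have hfilter : ∀ e (D : Finset κ), col e ∈ D →
      (E.erase e).filter (fun f => col f ∉ D) = E.filter (fun f => col f ∉ D) := by
    intro e D he
    rw [filter_erase, erase_eq_of_notMem (by simp [he])]
  have hc₁ : col e₁ ∉ D₁ := fun hc => by have := h D₁; rw [hfilter e₁ D₁ hc] at hD₁; omega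
  have hc₂ : col e₁ ∉ D₂ := fun hc => by
    have := h D₂; rw [hfilter e₂ D₂ (hcol ▸ hc)] at hD₂; omega
  set A := (E.erase e₁).filter fun f => col f ∉ D₁
  set B := (E.erase e₂).filter fun f => col f ∉ D₂
  have hunion : E.filter (fun f => col f ∉ D₁ ∩ D₂) ⊆ A ∪ B := by
    intro f hf
    simp only [A, B, mem_union, mem_filter, mem_erase, mem_inter] at hf ⊢
    by_cases hf₁ : f = e₁
    · subst hf₁; exact .inr ⟨⟨hne, hf.1⟩, hc₂⟩
    · by_cases hD : col f ∈ D₁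
      · exact .inr ⟨⟨by rintro rfl; exact hc₁ (hcol ▸ hD), hf.1⟩, fun h' => hf.2 ⟨hD, h'⟩⟩
      · exact .inl ⟨⟨hf₁, hf.1⟩, hD⟩
  have hinter : E.filter (fun f => col f ∉ insert (col e₁) (D₁ ∪ D₂)) ⊆ A ∩ B := by
    intro f hf
    simp only [A, B, mem_inter, mem_filter, mem_erase, mem_insert, mem_union, not_or] at hf ⊢
    obtain ⟨hfE, hfc, hf₁, hf₂⟩ := hf
    exact ⟨⟨⟨by rintro rfl; exact hfc rfl, hfE⟩, hf₁⟩,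
      ⟨⟨by rintro rfl; exact hfc hcol.symm, hfE⟩, hf₂⟩⟩
  have hins : (insert (col e₁) (D₁ ∪ D₂)).card = (D₁ ∪ D₂).card + 1 :=
    card_insert_of_notMem (by simp [hc₁, hc₂])
  have := h (D₁ ∩ D₂)
  have := h (insert (col e₁) (D₁ ∪ D₂))
  have := numComponents_antitone hunion
  have := numComponents_antitone hinter
  have := numComponents_add_numComponents_le A B
  have := card_inter_add_card_union D₁ D₂
  omega

theorem RadoCondition.exists_rainbow_isForest (h : RadoCondition col N E) :
    ∃ F ⊆ E, F.card = N ∧ IsForest F ∧ Set.InjOn col F := by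
  induction E using Finset.strongInduction with | _ E ih =>
  by_cases hinj : Set.InjOn col E
  · obtain ⟨F, -, hFE, hF, hFcomp⟩ :=
      exists_isForest_numComponents_eq isForest_empty (empty_subset E)
    have hN : N ≤ F.card := by
      have := h ∅
      simp only [notMem_empty, not_false_eq_true, filter_true, card_empty] at this
      unfold IsForest at hF
      omega
    obtain ⟨F', hF'F, rfl⟩ := exists_subset_card_eq hN
    exact ⟨F', hF'F.trans hFE, rfl, hF.subset hF'F, hinj.mono (by simpa using hF'F.trans hFE)⟩
  · obtain ⟨e₁, he₁, e₂, he₂, hcol, hne⟩ : ∃ e₁ ∈ E, ∃ e₂ ∈ E, col e₁ = col e₂ ∧ e₁ ≠ e₂ := by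
      simpa [Set.InjOn] using hinj
    rcases h.erase_or_erase he₁ he₂ hne hcol with h' | h'
    all_goals
      obtain ⟨F, hF, hFcard⟩ := ih _ (erase_ssubset ‹_›) h'
      exact ⟨F, hF.trans (erase_subset _ _), hFcard⟩

end Rado

end Components

section Bounds

variable {V : Type*} [Fintype V] [DecidableEq V] {S T : Finset (Sym2 V)}

omit [Fintype V] [DecidableEq V] in
lemma _root_.IsMatchingSet.subset (hM : IsMatchingSet S) (hTS : T ⊆ S) : IsMatchingSet T :=
  ⟨fun e he => hM.1 e (hTS he), fun e he f hf => hM.2 e (hTS he) f (hTS hf)⟩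

lemma isForest_of_isMatchingSet (hM : IsMatchingSet S) : IsForest S := by
  induction S using Finset.induction with
  | empty => exact isForest_empty
  | @insert e S he ih =>
    induction e using Sym2.ind with | _ x y =>
    have hxy : x ≠ y := fun h => hM.1 _ (mem_insert_self _ _) (by simp [h])
    have hx : ∀ f ∈ S, x ∉ f := fun f hf => hM.2 _ (mem_insert_self _ _) f
      (mem_insert_of_mem hf) (by rintro rfl; exact he hf) x (Sym2.mem_mk_left _ _)
    exact (ih (hM.subset (subset_insert _ _))).insert fun h =>
      hxy (eq_of_reachable_of_isolated hx h)

lemma numComponents_le_of_minDegree (Z : Finset V) (δ : ℕ) (hZ : ∀ e ∈ S, ∀ v ∈ e, v ∉ Z)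
    (hdeg : ∀ v ∉ Z, δ ≤ ((spanned S).neighborFinset v).card) :
    numComponents S ≤ Z.card + (Fintype.card V - Z.card) / (δ + 1) := by
  set f := (spanned S).connectedComponentMk
  set Y := univ.filter fun C => C ∉ Z.image f
  have hsplit : numComponents S ≤ (Z.image f).card + Y.card := by
    rw [numComponents, Nat.card_eq_fintype_card, ← card_univ]
    refine (card_le_card fun C _ => ?_).trans (card_union_le _ _)
    by_cases hC : C ∈ Z.image f
    exacts [mem_union_left _ hC, mem_union_right _ (mem_filter.2 ⟨mem_univ _, hC⟩)]
  have hfiber : ∀ C ∈ Y, δ + 1 ≤ ((univ \ Z).filter fun v => f v = C).card := by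
    intro C hC
    induction C using ConnectedComponent.ind with | _ v =>
    change δ + 1 ≤ ((univ \ Z).filter fun w => f w = f v).card
    have hv : v ∉ Z := fun h => (mem_filter.1 hC).2 (mem_image_of_mem f h)
    have hsub : insert v ((spanned S).neighborFinset v) ⊆ (univ \ Z).filter fun w => f w = f v := by
      intro w hw
      obtain rfl | hw := mem_insert.1 hw
      · simp [hv]
      · have hadj := (mem_neighborFinset _ _ _).1 hw
        simp only [mem_filter, mem_sdiff, mem_univ, true_and]
        exact ⟨hZ _ (spanned_adj.1 hadj).1 w (Sym2.mem_mk_right _ _),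
          ConnectedComponent.sound hadj.reachable.symm⟩
    have := card_le_card hsub
    rw [card_insert_of_notMem (by simp)] at this
    have := hdeg v hv
    omega
  have hsum : Y.card * (δ + 1) ≤ Fintype.card V - Z.card := by
    calc Y.card * (δ + 1) = ∑ _C ∈ Y, (δ + 1) := by rw [sum_const, smul_eq_mul]
      _ ≤ ∑ C ∈ Y, ((univ \ Z).filter fun v => f v = C).card := sum_le_sum hfiber
      _ = ((univ \ Z).filter fun v => f v ∈ Y).card := sum_card_fiberwise_eq_card_filter _ _ _
      _ ≤ (univ \ Z).card := card_filter_le _ _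
      _ = Fintype.card V - Z.card := by rw [card_sdiff_of_subset (subset_univ _), card_univ]
  have := (Nat.le_div_iff_mul_le (by omega : 0 < δ + 1)).2 hsum
  have := card_image_le (s := Z) (f := f)
  omega

end Bounds

section Greedy

variable {ι α κ : Type*}

lemma card_filter_mem_le_of_injOn [DecidableEq κ] {s : Finset α} {g : α → κ}
    (hg : Set.InjOn g s) (t : Finset κ) : (s.filter fun a => g a ∈ t).card ≤ t.card :=
  card_le_card_of_injOn g (fun _ ha => (mem_filter.1 ha).2)
    (hg.mono fun _ ha => (mem_filter.1 ha).1)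

lemma exists_mem_notMem_image_of_injOn [DecidableEq α] [DecidableEq κ] {s : Finset α}
    {g : α → κ} (hg : Set.InjOn g s) (S : Finset ι) (f : ι → α) (h : ι → κ)
    (hs : 2 * S.card < s.card) : ∃ w ∈ s, w ∉ S.image f ∧ g w ∉ S.image h := by
  by_contra! hall
  have hsub : s ⊆ S.image f ∪ s.filter fun w => g w ∈ S.image h := fun w hw => by
    by_cases hwf : w ∈ S.image f
    exacts [mem_union_left _ hwf, mem_union_right _ (mem_filter.2 ⟨hw, hall w hw hwf⟩)]
  have := (card_le_card hsub).trans (card_union_le _ _)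
  have := (card_filter_mem_le_of_injOn hg (S.image h)).trans card_image_le
  have := card_image_le (s := S) (f := f)
  omega

lemma injOn_insert_update [DecidableEq ι] {f : ι → α} {S : Set ι} {x : ι} (hx : x ∉ S)
    (hf : Set.InjOn f S) {w : α} (hw : w ∉ f '' S) :
    Set.InjOn (Function.update f x w) (insert x S) := by
  have heq : Set.EqOn (Function.update f x w) f S := fun i hi =>
    Function.update_of_ne (by rintro rfl; exact hx hi) _ _
  rw [Set.injOn_insert hx, heq.image_eq, Function.update_self]
  exact ⟨hf.congr heq.symm, hw⟩

lemma exists_injOn_extension [DecidableEq ι] (cand : ι → Finset α) (col : ι → α → κ)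
    {P X : Finset ι} {f₀ : ι → α} (hPX : Disjoint P X) (hf₀ : Set.InjOn f₀ P)
    (hcol₀ : Set.InjOn (fun i => col i (f₀ i)) P)
    (hcand : ∀ i ∈ X, 2 * (P.card + X.card) ≤ (cand i).card + 1)
    (hcol : ∀ i ∈ X, Set.InjOn (col i) (cand i)) :
    ∃ f : ι → α, (∀ i ∈ P, f i = f₀ i) ∧ (∀ i ∈ X, f i ∈ cand i) ∧
      Set.InjOn f ↑(P ∪ X) ∧ Set.InjOn (fun i => col i (f i)) ↑(P ∪ X) := by
  induction X using Finset.induction with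
  | empty => exact ⟨f₀, fun _ _ => rfl, by simp, by simpa using hf₀, by simpa using hcol₀⟩
  | @insert x X hx ih =>
    have hPX' := disjoint_of_subset_right (subset_insert _ _) hPX
    obtain ⟨f, hfP, hfX, hf, hfcol⟩ := ih hPX'
      (fun i hi => le_trans (by rw [card_insert_of_notMem hx]; omega)
        (hcand i (mem_insert_of_mem hi)))
      (fun i hi => hcol i (mem_insert_of_mem hi))
    have hxS : x ∉ P ∪ X := notMem_union.2 ⟨disjoint_right.1 hPX (mem_insert_self x X), hx⟩
    obtain ⟨w, hwc, hwf, hwcol⟩ := exists_mem_notMem_image_of_injOn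
      (hcol x (mem_insert_self x X)) (P ∪ X) f (fun i => col i (f i)) (by
        have := hcand x (mem_insert_self x X)
        rw [card_insert_of_notMem hx] at this
        rw [card_union_of_disjoint hPX']
        omega)
    have hcol_update : (fun i => col i (Function.update f x w i)) =
        Function.update (fun i => col i (f i)) x (col x w) := by
      funext i
      by_cases hi : i = x
      · subst hi; simp
      · simp [hi]
    have hS : (↑(P ∪ insert x X) : Set ι) = insert x ↑(P ∪ X) := by
      simp only [union_insert, coe_insert]
    refine ⟨Function.update f x w, fun i hi => ?_, fun i hi => ?_, ?_, ?_⟩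
    · rw [Function.update_of_ne (by rintro rfl; exact hxS (mem_union_left _ hi)), hfP i hi]
    · obtain rfl | hi' := mem_insert.1 hi
      · simpa using hwc
      · rw [Function.update_of_ne (by rintro rfl; exact hx hi')]; exact hfX i hi'
    · rw [hS]
      exact injOn_insert_update (by simpa using hxS) hf (by simpa using hwf)
    · rw [hS, hcol_update]
      exact injOn_insert_update (by simpa using hxS) hfcol (by simpa using hwcol)

end Greedy

section Pendants

variable {V : Type*} [Fintype V] [DecidableEq V] {G : SimpleGraph V} {c : Sym2 V → ℕ}

omit [Fintype V] [DecidableEq V] in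
lemma _root_.ProperColoring.injOn (hc : ProperColoring G c) {v : V} {s : Set V}
    (hs : s ⊆ G.neighborSet v) : Set.InjOn (fun w => c s(v, w)) s := fun _ hw _ hw' h => by
  by_contra hne
  exact hc (hs hw) (hs hw') hne h

lemma _root_.ProperColoring.injOn_sdiff (hc : ProperColoring G c) (v : V) (X : Finset V) :
    Set.InjOn (fun w => c s(v, w)) ↑(G.neighborFinset v \ X) :=
  hc.injOn fun w hw => by simpa using (mem_sdiff.1 hw).1

structure IsRainbowPendants (G : SimpleGraph V) (c : Sym2 V → ℕ) (P : Finset V) (b : V → V) :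
    Prop where
  adj : ∀ a ∈ P, G.Adj a (b a)
  apply_notMem : ∀ a ∈ P, b a ∉ P
  injOn : Set.InjOn b P
  injOn_colour : Set.InjOn (fun a => c s(a, b a)) P

/-- The vertices of `A` are only known to have degree at least `3 * A.card`, so they are
attached first; the remaining vertices of `P` are then chosen away from their partners. -/
lemma exists_isRainbowPendants (hc : ProperColoring G c) {A : Finset V} {k : ℕ}
    (hAk : A.card ≤ k) (hk : 4 * k ≤ Fintype.card V)
    (hdegA : ∀ a ∈ A, 3 * A.card ≤ G.degree a)
    (hdeg : ∀ v ∉ A, Fintype.card V - k ≤ (G.neighborFinset v \ A).card) :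
    ∃ P b, A ⊆ P ∧ P.card = k ∧ IsRainbowPendants G c P b := by
  obtain ⟨f, -, hfA, hf, hfcol⟩ := exists_injOn_extension (fun a => G.neighborFinset a \ A)
    (fun a w => c s(a, w)) (P := ∅) (X := A) (f₀ := id) (disjoint_empty_left _) (by simp)
    (by simp) (fun a ha => by
      have := le_card_sdiff A (G.neighborFinset a)
      rw [card_neighborFinset_eq_degree] at this
      have := hdegA a ha
      simp only [card_empty, zero_add]
      omega)
    (fun a _ => hc.injOn_sdiff a A)
  rw [empty_union] at hf hfcol
  have hfree : k - A.card ≤ (univ \ (A ∪ A.image f)).card := by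
    rw [card_sdiff_of_subset (subset_univ _), card_univ]
    have := (card_union_le A (A.image f)).trans (Nat.add_le_add_left card_image_le _)
    omega
  obtain ⟨E, hE, hEcard⟩ := exists_subset_card_eq hfree
  have hAE : Disjoint A E := disjoint_right.2 fun v hv hvA => by
    simpa [hvA] using hE hv
  set P := A ∪ E
  obtain ⟨b, hbA, hbE, hb, hbcol⟩ := exists_injOn_extension (fun a => G.neighborFinset a \ P)
    (fun a w => c s(a, w)) (X := E) hAE hf hfcol (fun a ha => by
      show 2 * (A.card + E.card) ≤ (G.neighborFinset a \ (A ∪ E)).card + 1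
      have h₁ := hdeg a (disjoint_right.1 hAE ha)
      have h₂ := le_card_sdiff E (G.neighborFinset a \ A)
      rw [sdiff_sdiff_left, sup_eq_union] at h₂
      omega)
    (fun a _ => hc.injOn_sdiff a P)
  have hP : P.card = k := by rw [card_union_of_disjoint hAE]; omega
  refine ⟨P, b, subset_union_left, hP, fun a ha => ?_, fun a ha => ?_, hb, hbcol⟩
  · obtain ha | ha := mem_union.1 ha
    · simpa [hbA a ha] using (mem_sdiff.1 (hfA a ha)).1
    · simpa using (mem_sdiff.1 (hbE a ha)).1
  · obtain ha | ha := mem_union.1 ha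
    · rw [hbA a ha]
      refine notMem_union.2 ⟨(mem_sdiff.1 (hfA a ha)).2, fun h => ?_⟩
      simpa [mem_image_of_mem f ha] using hE h
    · exact (mem_sdiff.1 (hbE a ha)).2

end Pendants

section Pool

variable {V : Type*} [Fintype V] [DecidableEq V] {G : SimpleGraph V} {c : Sym2 V → ℕ}
  {P : Finset V} {C : Finset ℕ} {M : Finset (Sym2 V)}

noncomputable def edgePool (G : SimpleGraph V) (c : Sym2 V → ℕ) (P : Finset V) (C : Finset ℕ) :
    Finset (Sym2 V) :=
  G.edgeFinset.filter fun e => (∀ v ∈ e, v ∉ P) ∧ c e ∉ C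

lemma filter_edgePool (D : Finset ℕ) :
    (edgePool G c P C).filter (fun e => c e ∉ D) = edgePool G c P (C ∪ D) := by
  ext e
  simp only [edgePool, mem_filter, mem_union, not_or]
  tauto

lemma numComponents_edgePool_le (hc : ProperColoring G c) (q : ℕ)
    (hq : ∀ v ∉ P, q + C.card ≤ (G.neighborFinset v \ P).card) :
    numComponents (edgePool G c P C) ≤ P.card + (Fintype.card V - P.card) / (q + 1) := by
  refine numComponents_le_of_minDegree P q (fun e he => (mem_filter.1 he).2.1) fun v hv => ?_
  have hsub : (G.neighborFinset v \ P).filter (fun w => c s(v, w) ∉ C) ⊆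
      (spanned (edgePool G c P C)).neighborFinset v := by
    intro w hw
    simp only [mem_filter, mem_sdiff, mem_neighborFinset] at hw
    obtain ⟨⟨hvw, hw⟩, hwC⟩ := hw
    rw [mem_neighborFinset, spanned_adj]
    refine ⟨mem_filter.2 ⟨mem_edgeFinset.2 hvw, fun u hu => ?_, hwC⟩, hvw.ne⟩
    rcases Sym2.mem_iff.1 hu with rfl | rfl
    exacts [hv, hw]
  have hsplit := card_filter_add_card_filter_not (s := G.neighborFinset v \ P)
    (p := fun w => c s(v, w) ∉ C)
  have hbad : ((G.neighborFinset v \ P).filter fun w => ¬ c s(v, w) ∉ C).card ≤ C.card := by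
    simpa only [not_not] using card_filter_mem_le_of_injOn (hc.injOn_sdiff v P) C
  have := card_le_card hsub
  have := hq v hv
  omega

lemma _root_.IsMatchingSet.card_le_card_filter_add (hM : IsMatchingSet M) (P : Finset V) :
    M.card ≤ (M.filter fun e => ∀ v ∈ e, v ∉ P).card + P.card := by
  rw [← card_filter_add_card_filter_not (p := fun e => ∀ v ∈ e, v ∉ P)]
  refine Nat.add_le_add_left (card_le_card_of_forall_subsingleton (fun e v => v ∈ e)
    (fun e he => ?_) fun v _ e₁ he₁ e₂ he₂ => ?_) _
  · simpa [and_comm] using (mem_filter.1 he).2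
  · by_contra hne
    exact hM.2 e₁ (mem_filter.1 he₁.1).1 e₂ (mem_filter.1 he₂.1).1 hne v he₁.2 he₂.2

lemma numComponents_edgePool_add_card_le (hM : IsMatchingSet M) (hMG : ↑M ⊆ G.edgeSet)
    (hMC : ∀ e ∈ M, c e ∉ C) :
    numComponents (edgePool G c P C) + M.card ≤ Fintype.card V + P.card := by
  have hM' : (M.filter fun e => ∀ v ∈ e, v ∉ P) ⊆ edgePool G c P C := fun e he => by
    obtain ⟨heM, heP⟩ := mem_filter.1 he
    exact mem_filter.2 ⟨mem_edgeFinset.2 (hMG heM), heP, hMC e heM⟩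
  have hforest := isForest_of_isMatchingSet (hM.subset (filter_subset (fun e => ∀ v ∈ e, v ∉ P) M))
  have := numComponents_antitone hM'
  have := hM.card_le_card_filter_add P
  unfold IsForest at hforest
  rw [Nat.card_eq_fintype_card] at hforest
  omega

/-- Few forbidden colours: every vertex outside `P` keeps many pool neighbours, so there are few
components. Many forbidden colours: a rich class avoiding them supplies a large matching. -/
lemma radoCondition_edgePool (hc : ProperColoring G c) {k : ℕ} (hP : P.card = k)
    (hC : C.card ≤ k) (hk : 3 ≤ k) (h5k : 5 * k ≤ Fintype.card V)
    (hdeg : ∀ v ∉ P, Fintype.card V - 2 * k ≤ (G.neighborFinset v \ P).card)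
    (hrich : ∀ D : Finset ℕ, D.card + 1 < Fintype.card V → ∃ M : Finset (Sym2 V),
      ↑M ⊆ G.edgeSet ∧ (∀ e ∈ M, c e ∉ D) ∧ IsMatchingSet M ∧ 6 * k ≤ M.card + 6) :
    RadoCondition c (Fintype.card V - k - 1) (edgePool G c P C) := by
  intro D
  rw [filter_edgePool, Nat.card_eq_fintype_card]
  have hCD := card_union_le C D
  by_cases hsmall : Fintype.card V - k ≤ D.card + 1
  · have := numComponents_le_card (S := edgePool G c P (C ∪ D))
    rw [Nat.card_eq_fintype_card] at this
    omega
  by_cases hmid : D.card + 4 * k + 1 ≤ Fintype.card V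
  · obtain ⟨q, hq⟩ : ∃ q, Fintype.card V = q + 3 * k + D.card :=
      ⟨Fintype.card V - 3 * k - D.card, by omega⟩
    have hcomp := numComponents_edgePool_le hc q (C := C ∪ D) fun v hv => by
      have := hdeg v hv; omega
    have hlt : Fintype.card V - k < (D.card + 2) * (q + 1) := by
      have : (k + 1) * D.card ≤ q * D.card := Nat.mul_le_mul_right _ (by omega)
      rw [show Fintype.card V - k = q + 2 * k + D.card by omega]
      nlinarith
    have := (Nat.div_lt_iff_lt_mul (by omega : 0 < q + 1)).2 hlt
    rw [hP] at hcomp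
    omega
  · obtain ⟨M, hMG, hMC, hM, hMcard⟩ := hrich (C ∪ D) (by omega)
    have := numComponents_edgePool_add_card_le (P := P) hM hMG hMC
    omega

end Pool

section Tree

variable {V : Type*} [Fintype V] [DecidableEq V] {G : SimpleGraph V} {c : Sym2 V → ℕ}
  {P : Finset V} {b : V → V} {F : Finset (Sym2 V)}

/-- The vertices of `P` are isolated in `F` and already account for `P.card` components. -/
lemma reachable_of_numComponents_le (hF : ∀ e ∈ F, ∀ v ∈ e, v ∉ P)
    (hcomp : numComponents F ≤ P.card + 1) {u v : V} (hu : u ∉ P) (hv : v ∉ P) :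
    (spanned F).Reachable u v := by
  by_contra huv
  set f := (spanned F).connectedComponentMk
  have hiso : ∀ a ∈ P, ∀ w, f a = f w → a = w := fun a ha w h =>
    eq_of_reachable_of_isolated (fun e he hae => hF e he a hae ha) (ConnectedComponent.exact h)
  have hfu : f u ∉ insert (f v) (P.image f) := by
    simp only [mem_insert, mem_image, not_or, not_exists, not_and]
    exact ⟨fun h => huv (ConnectedComponent.exact h), fun a ha h => hu (hiso a ha u h ▸ ha)⟩
  have hfv : f v ∉ P.image f := by
    simp only [mem_image, not_exists, not_and]
    exact fun a ha h => hv (hiso a ha v h ▸ ha)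
  have hcard := card_le_univ (insert (f u) (insert (f v) (P.image f)))
  rw [card_insert_of_notMem hfu, card_insert_of_notMem hfv,
    card_image_of_injOn fun a ha a' _ h => hiso a ha a' h, ← Nat.card_eq_fintype_card] at hcard
  unfold numComponents at hcomp
  omega

omit [Fintype V] [DecidableEq V] in
lemma edgeSet_spanned {S : Finset (Sym2 V)} (h : ∀ e ∈ S, ¬ e.IsDiag) :
    (spanned S).edgeSet = S := by
  ext e
  simp only [spanned, edgeSet_fromEdgeSet, Set.mem_sdiff, mem_coe]
  exact ⟨And.left, fun he => ⟨he, h e he⟩⟩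

def attachPendants (F : Finset (Sym2 V)) (P : Finset V) (b : V → V) : Finset (Sym2 V) :=
  F ∪ P.image fun a => s(a, b a)

omit [Fintype V] in
lemma spanned_attachPendants_adj (hb : ∀ a ∈ P, b a ∉ P) {u w : V} :
    (spanned (attachPendants F P b)).Adj u w ↔
      (spanned F).Adj u w ∨ (u ∈ P ∧ w = b u) ∨ (w ∈ P ∧ u = b w) := by
  simp only [spanned_adj, attachPendants, mem_union, mem_image, Sym2.eq_iff]
  constructor
  · rintro ⟨hF | ⟨a, ha, ⟨rfl, rfl⟩ | ⟨rfl, rfl⟩⟩, hne⟩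
    exacts [.inl ⟨hF, hne⟩, .inr (.inl ⟨ha, rfl⟩), .inr (.inr ⟨ha, rfl⟩)]
  · rintro (h | ⟨hu, rfl⟩ | ⟨hw, rfl⟩)
    · exact ⟨.inl h.1, h.2⟩
    · exact ⟨.inr ⟨u, hu, .inl ⟨rfl, rfl⟩⟩, fun h => hb u hu (by rwa [← h])⟩
    · exact ⟨.inr ⟨w, hw, .inr ⟨rfl, rfl⟩⟩, fun h => hb w hw (by rwa [h])⟩

lemma isTree_spanned_attachPendants (hF : ∀ e ∈ F, ∀ v ∈ e, v ∉ P) (hb : ∀ a ∈ P, b a ∉ P)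
    (hforest : IsForest F) (hcard : F.card + P.card + 1 = Fintype.card V) :
    (spanned (attachPendants F P b)).IsTree := by
  have hFT : spanned F ≤ spanned (attachPendants F P b) := spanned_mono subset_union_left
  have hcomp : numComponents F ≤ P.card + 1 := by
    unfold IsForest at hforest
    rw [Nat.card_eq_fintype_card] at hforest
    omega
  obtain ⟨w₀, -, hw₀⟩ := exists_mem_notMem_of_card_lt_card (s := P) (t := univ)
    (by rw [card_univ]; omega)
  have hreach : ∀ u, (spanned (attachPendants F P b)).Reachable w₀ u := fun u => by
    have hF' := fun {u} (hu : u ∉ P) => (reachable_of_numComponents_le hF hcomp hw₀ hu).mono hFT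
    by_cases hu : u ∈ P
    · exact (hF' (hb u hu)).trans
        ((spanned_attachPendants_adj hb).2 (.inr (.inl ⟨hu, rfl⟩))).reachable.symm
    · exact hF' hu
  have hinj : Set.InjOn (fun a => s(a, b a)) P := fun a ha a' ha' h => by
    obtain ⟨rfl, -⟩ | ⟨rfl, -⟩ := Sym2.eq_iff.1 h
    exacts [rfl, absurd ha (hb a' ha')]
  have hdisj : Disjoint F (P.image fun a => s(a, b a)) := disjoint_right.2 fun e he heF => by
    obtain ⟨a, ha, rfl⟩ := mem_image.1 he
    exact hF _ heF a (Sym2.mem_mk_left _ _) ha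
  have hdiag : ∀ e ∈ attachPendants F P b, ¬ e.IsDiag := fun e he => by
    obtain he | he := mem_union.1 he
    · exact hforest.not_isDiag he
    · obtain ⟨a, ha, rfl⟩ := mem_image.1 he
      exact fun h => hb a ha (by rwa [← Sym2.mk_isDiag_iff.1 h])
  refine isTree_iff_connected_and_card.2
    ⟨(connected_iff_exists_forall_reachable _).2 ⟨w₀, hreach⟩, ?_⟩
  rw [edgeSet_spanned hdiag, Nat.card_coe_set_eq, Set.ncard_coe_finset, Nat.card_eq_fintype_card,
    attachPendants, card_union_of_disjoint hdisj, card_image_of_injOn hinj, hcard]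


lemma degree_spanned_attachPendants_of_mem (hF : ∀ e ∈ F, ∀ v ∈ e, v ∉ P)
    (hb : ∀ a ∈ P, b a ∉ P) {a : V} (ha : a ∈ P) :
    (spanned (attachPendants F P b)).degree a = 1 := by
  rw [← card_neighborFinset_eq_degree, card_eq_one]
  refine ⟨b a, ext fun w => ?_⟩
  rw [mem_neighborFinset, spanned_attachPendants_adj hb, mem_singleton]
  constructor
  · rintro (h | ⟨-, rfl⟩ | ⟨hw, rfl⟩)
    · exact absurd ha (hF _ (spanned_adj.1 h).1 a (Sym2.mem_mk_left _ _))
    · rfl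
    · exact absurd ha (hb w hw)
  · rintro rfl
    exact .inr (.inl ⟨ha, rfl⟩)

lemma degree_spanned_attachPendants_le (hF : ∀ e ∈ F, ∀ v ∈ e, v ∉ P)
    (hb : ∀ a ∈ P, b a ∉ P) (hinj : Set.InjOn b P) {v : V} (hv : v ∉ P) :
    (spanned (attachPendants F P b)).degree v ≤ Fintype.card V - P.card := by
  rw [← card_neighborFinset_eq_degree]
  have hsub : (spanned (attachPendants F P b)).neighborFinset v ⊆
      (univ \ P).erase v ∪ P.filter (b · = v) := fun w hw => by
    rw [mem_neighborFinset, spanned_attachPendants_adj hb] at hw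
    rcases hw with h | ⟨hv', -⟩ | ⟨hw, rfl⟩
    · refine mem_union_left _ (mem_erase.2 ⟨h.ne.symm, mem_sdiff.2 ⟨mem_univ _, ?_⟩⟩)
      exact hF _ (spanned_adj.1 h).1 w (Sym2.mem_mk_right _ _)
    · exact absurd hv' hv
    · exact mem_union_right _ (mem_filter.2 ⟨hw, rfl⟩)
  have h₁ : ((univ \ P).erase v).card = Fintype.card V - P.card - 1 := by
    rw [card_erase_of_mem (by simpa using hv), card_sdiff_of_subset (subset_univ _), card_univ]
  have h₂ : (P.filter (b · = v)).card ≤ 1 := card_le_one.2 fun a ha a' ha' => by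
    rw [mem_filter] at ha ha'
    exact hinj ha.1 ha'.1 (ha.2.trans ha'.2.symm)
  have hP : P.card < Fintype.card V := card_lt_univ_of_notMem hv
  have := card_le_card hsub
  have := card_union_le ((univ \ P).erase v) (P.filter (b · = v))
  omega

omit [Fintype V] in
lemma injOn_colour_attachPendants (hb : IsRainbowPendants G c P b) (hFc : Set.InjOn c F)
    (hFcol : ∀ e ∈ F, c e ∉ P.image fun a => c s(a, b a)) :
    Set.InjOn c ↑(attachPendants F P b) := by
  have hcross : ∀ e ∈ F, ∀ e' ∈ P.image (fun a => s(a, b a)), c e ≠ c e' := fun e he e' he' h => by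
    obtain ⟨a, ha, rfl⟩ := mem_image.1 he'
    exact hFcol e he (mem_image.2 ⟨a, ha, h.symm⟩)
  rw [attachPendants, coe_union, Set.injOn_union (disjoint_coe.2 <| disjoint_left.2
    fun e he he' => hcross e he e he' rfl)]
  refine ⟨hFc, ?_, fun e he e' he' => hcross e he e' he'⟩
  rw [coe_image]
  exact Set.InjOn.image_of_comp hb.injOn_colour

theorem IsRainbowPendants.exists_isTree (hb : IsRainbowPendants G c P b)
    (hFpool : F ⊆ edgePool G c P (P.image fun a => c s(a, b a))) (hforest : IsForest F)
    (hcard : F.card + P.card + 1 = Fintype.card V) (hFc : Set.InjOn c F) :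
    ∃ T ≤ G, T.IsTree ∧ IsRainbow c T.edgeSet ∧
      (∀ v, T.degree v ≤ Fintype.card V - P.card) ∧ ∀ a ∈ P, T.degree a = 1 := by
  have hF : ∀ e ∈ F, ∀ v ∈ e, v ∉ P := fun e he => (mem_filter.1 (hFpool he)).2.1
  have hbP := hb.apply_notMem
  refine ⟨spanned (attachPendants F P b), fun u w h => ?_,
    isTree_spanned_attachPendants hF hbP hforest hcard,
    (injOn_colour_attachPendants hb hFc fun e he => (mem_filter.1 (hFpool he)).2.2).mono
      (by simp [spanned]), fun v => ?_,
    fun a ha => degree_spanned_attachPendants_of_mem hF hbP ha⟩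
  · rcases (spanned_attachPendants_adj hbP).1 h with h | ⟨hu, rfl⟩ | ⟨hw, rfl⟩
    · exact mem_edgeFinset.1 (mem_filter.1 (hFpool (spanned_adj.1 h).1)).1
    · exact hb.adj u hu
    · exact (hb.adj w hw).symm
  · by_cases hv : v ∈ P
    · rw [degree_spanned_attachPendants_of_mem hF hbP hv]
      omega
    · exact degree_spanned_attachPendants_le hF hbP hb.injOn hv

end Tree

section Main

variable {V : Type*} [Fintype V] [DecidableEq V] {G : SimpleGraph V} {c : Sym2 V → ℕ}

omit [DecidableEq V] in
lemma _root_.WellColoured.exists_richClass_disjoint {α : ℝ} (h : WellColoured G c α)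
    (D : Finset ℕ) (hD : D.card + 1 < Fintype.card V) :
    ∃ U, RichClass G c α U ∧ ∀ x ∈ D, x ∉ U := by
  obtain ⟨U, hdisj, hrich, -⟩ := h
  suffices ∃ i, ∀ x ∈ D, x ∉ U i by
    obtain ⟨i, hi⟩ := this
    exact ⟨U i, hrich i, hi⟩
  by_contra! hall
  have := card_le_card_of_forall_subsingleton (fun i x => x ∈ U i) (s := univ) (t := D)
    (fun i _ => hall i) fun x _ i hi j hj => by
      by_contra hij
      exact Set.disjoint_left.1 (hdisj i j hij) hi.2 hj.2
  rw [card_univ, Fintype.card_fin] at this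
  omega

theorem exists_rainbow_isTree_of_card (hc : ProperColoring G c) {A : Finset V} {k : ℕ}
    (hk : 3 ≤ k) (h5k : 5 * k ≤ Fintype.card V) (hAk : A.card ≤ k)
    (hdegA : ∀ a ∈ A, 3 * A.card ≤ G.degree a)
    (hdeg : ∀ v ∉ A, Fintype.card V - k ≤ (G.neighborFinset v \ A).card)
    (hrich : ∀ D : Finset ℕ, D.card + 1 < Fintype.card V → ∃ M : Finset (Sym2 V),
      ↑M ⊆ G.edgeSet ∧ (∀ e ∈ M, c e ∉ D) ∧ IsMatchingSet M ∧ 6 * k ≤ M.card + 6) :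
    ∃ T ≤ G, T.IsTree ∧ IsRainbow c T.edgeSet ∧
      (∀ v, T.degree v ≤ Fintype.card V - k) ∧ ∀ a ∈ A, T.degree a = 1 := by
  obtain ⟨P, b, hAP, hP, hb⟩ := exists_isRainbowPendants hc hAk (by omega) hdegA hdeg
  have hdegP : ∀ v ∉ P, Fintype.card V - 2 * k ≤ (G.neighborFinset v \ P).card := fun v hv => by
    have := hdeg v fun h => hv (hAP h)
    have := le_card_sdiff P (G.neighborFinset v \ A)
    rw [sdiff_sdiff_left, sup_eq_union, union_eq_right.2 hAP] at this
    omega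
  obtain ⟨F, hFpool, hFcard, hforest, hFc⟩ := (radoCondition_edgePool hc hP
    (card_image_le.trans hP.le) hk h5k hdegP hrich).exists_rainbow_isForest
  obtain ⟨T, hTG, hT, hTc, hTdeg, hTleaf⟩ := hb.exists_isTree hFpool hforest (by omega) hFc
  exact ⟨T, hTG, hT, hTc, hP ▸ hTdeg, fun a ha => hTleaf a (hAP ha)⟩

end Main

lemma three_le_ceil_and_five_mul_ceil_le {α : ℝ} {n : ℕ} (hα0 : 0 < α) (hα : α ≤ 1 / 15)
    (hn : 1 / α ^ 2 ≤ n) : 3 ≤ ⌈α * n⌉₊ ∧ 5 * ⌈α * n⌉₊ ≤ n := by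
  have h15 : 15 ≤ α * n :=
    calc 15 ≤ 1 / α := by rw [le_div_iff₀ hα0]; linarith
      _ = α * (1 / α ^ 2) := by field_simp
      _ ≤ α * n := mul_le_mul_of_nonneg_left hn hα0.le
  have hαn : α * n ≤ n / 15 := by nlinarith [(Nat.cast_nonneg n : (0 : ℝ) ≤ n)]
  have hk₁ : α * n ≤ ⌈α * n⌉₊ := Nat.le_ceil _
  have hk₂ : (⌈α * n⌉₊ : ℝ) < α * n + 1 := Nat.ceil_lt_add_one (by positivity)
  constructor
  · exact_mod_cast (by linarith : (3 : ℝ) ≤ ⌈α * n⌉₊)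
  · exact_mod_cast (by linarith : (5 * ⌈α * n⌉₊ : ℝ) ≤ n)

end RainbowTree

theorem stmt6 {V : Type*} [Fintype V] [DecidableEq V] (G : SimpleGraph V)
    (c : Sym2 V → ℕ) (α β : ℝ) (hβ : 0 < β) (hβα : β ≤ α) (hα : α ≤ 1 / 15)
    (hn : 1 / α ^ 2 ≤ (Fintype.card V : ℝ))
    (hproper : ProperColoring G c)
    (hwell : WellColoured G c (6 * α))
    (hdeg : ∀ v : V, 3 * β * (Fintype.card V : ℝ) ≤ (G.degree v : ℝ))
    (A : Finset V) (hA : (A.card : ℝ) ≤ β * (Fintype.card V : ℝ))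
    (hdegA : ∀ v : V, v ∉ A →
      (1 - α) * (Fintype.card V : ℝ) ≤ ((G.neighborFinset v \ A).card : ℝ)) :
    ∃ T : SimpleGraph V, T ≤ G ∧ T.IsTree ∧ IsRainbow c T.edgeSet ∧
      (∀ v : V, (T.degree v : ℝ) ≤ (1 - α) * (Fintype.card V : ℝ)) ∧
      (∀ v ∈ A, T.degree v = 1) := by
  set n := Fintype.card V
  have hα0 : 0 < α := hβ.trans_le hβα
  obtain ⟨hk, h5k⟩ := RainbowTree.three_le_ceil_and_five_mul_ceil_le hα0 hα hn
  have hβn : β * n ≤ α * n := mul_le_mul_of_nonneg_right hβα (Nat.cast_nonneg n)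
  set k := ⌈α * n⌉₊
  have hk₁ : α * n ≤ k := Nat.le_ceil _
  have hk₂ : (k : ℝ) < α * n + 1 := Nat.ceil_lt_add_one (by positivity)
  have hnk : ((n - k : ℕ) : ℝ) = n - k := Nat.cast_sub (by omega)
  obtain ⟨T, hTG, hT, hTc, hTdeg, hTA⟩ :=
    RainbowTree.exists_rainbow_isTree_of_card hproper (A := A) hk h5k
    (by exact_mod_cast (by linarith : (A.card : ℝ) ≤ k))
    (fun a _ => by exact_mod_cast (by linarith [hdeg a] : (3 * A.card : ℝ) ≤ G.degree a))
    (fun v hv => by exact_mod_cast (by linarith [hdegA v hv] :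
      ((n - k : ℕ) : ℝ) ≤ (G.neighborFinset v \ A).card))
    fun D hD => by
      obtain ⟨U, ⟨M, hMG, hMU, hM, hMcard⟩, hDU⟩ := hwell.exists_richClass_disjoint D hD
      exact ⟨M, hMG, fun e he hD => hDU _ hD (hMU e he), hM,
        by exact_mod_cast (by linarith : (6 * k : ℝ) ≤ M.card + 6)⟩
  refine ⟨T, hTG, hT, hTc, fun v => ?_, hTA⟩
  calc (T.degree v : ℝ) ≤ ((n - k : ℕ) : ℝ) := by exact_mod_cast hTdeg v
    _ ≤ (1 - α) * n := by linarith
end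

section
/- Let r, n ∈ ℕ. Any properly edge-coloured n-vertex graph G with at least rn/3 edges, maximum degree at most n/10, and in which no colour appears on a matching of size at least n/10, contains a rainbow matching with r edges. -/
open scoped Classical

/-! Greedy: put any edge `uv` into the matching and delete every edge that meets `u` or `v` or has
the colour of `uv`. This deletes at most `deg u + deg v + |colour class| < 3n/10 ≤ n/3` edges, and
what remains is again properly coloured with the same degree and colour-class bounds, so `r` rounds
succeed. -/

namespace SimpleGraph

variable {V : Type*} [Fintype V] {G H : SimpleGraph V} {c : Sym2 V → ℕ}

noncomputable def colorClass (G : SimpleGraph V) (c : Sym2 V → ℕ) (k : ℕ) : Finset (Sym2 V) :=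
  G.edgeFinset.filter (c · = k)

lemma colorClass_mono (hHG : H ≤ G) (k : ℕ) : H.colorClass c k ⊆ G.colorClass c k :=
  Finset.filter_subset_filter _ (edgeFinset_mono hHG)

lemma color_eq_of_mem_colorClass {k : ℕ} {e : Sym2 V} (he : e ∈ G.colorClass c k) : c e = k :=
  (Finset.mem_filter.mp he).2

lemma coe_colorClass_subset_edgeSet (k : ℕ) : ↑(G.colorClass c k) ⊆ G.edgeSet := fun _ he =>
  mem_edgeFinset.mp (Finset.mem_filter.mp he).1

/-- The edges that can no longer be added to a rainbow matching once `s(u, v)` is in it. -/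
noncomputable def conflictEdges (G : SimpleGraph V) (c : Sym2 V → ℕ) (u v : V) : Finset (Sym2 V) :=
  G.incidenceFinset u ∪ G.incidenceFinset v ∪ G.colorClass c (c s(u, v))

lemma card_conflictEdges_le (u v : V) :
    (G.conflictEdges c u v).card ≤ G.degree u + G.degree v + (G.colorClass c (c s(u, v))).card := by
  rw [← G.card_incidenceFinset_eq_degree u, ← G.card_incidenceFinset_eq_degree v]
  exact (Finset.card_union_le _ _).trans (Nat.add_le_add_right (Finset.card_union_le _ _) _)

lemma card_edgeFinset_le_deleteEdges_add (s : Finset (Sym2 V)) :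
    G.edgeFinset.card ≤ (G.deleteEdges ↑s).edgeFinset.card + s.card := by
  rw [edgeFinset_deleteEdges]
  exact Finset.card_le_card_sdiff_add_card

lemma notMem_of_mem_edgeSet_deleteEdges_conflictEdges {u v : V} {f : Sym2 V}
    (hf : f ∈ (G.deleteEdges ↑(G.conflictEdges c u v)).edgeSet) :
    u ∉ f ∧ v ∉ f ∧ c f ≠ c s(u, v) := by
  obtain ⟨hfG, hfS⟩ := (edgeSet_deleteEdges _ ▸ hf : f ∈ G.edgeSet \ _)
  simp only [conflictEdges, Finset.coe_union, Set.mem_union, Finset.mem_coe,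
    mem_incidenceFinset, colorClass, Finset.mem_filter, mem_edgeFinset, not_or] at hfS
  exact ⟨fun h => hfS.1.1 ⟨hfG, h⟩, fun h => hfS.1.2 ⟨hfG, h⟩, fun h => hfS.2 ⟨hfG, h⟩⟩

end SimpleGraph

section

open SimpleGraph

variable {V : Type*} {G H : SimpleGraph V} {c : Sym2 V → ℕ}

lemma ProperColoring.of_le (hc : ProperColoring G c) (hHG : H ≤ G) : ProperColoring H c :=
  fun _ _ _ hab hab' hne => hc (hHG hab) (hHG hab') hne

lemma ProperColoring.isMatchingSet_of_color_eq (hc : ProperColoring G c) {M : Finset (Sym2 V)}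
    (hMG : ↑M ⊆ G.edgeSet) {k : ℕ} (hk : ∀ e ∈ M, c e = k) : IsMatchingSet M := by
  refine ⟨fun e he => G.not_isDiag_of_mem_edgeSet (hMG he), fun e he f hf hef w hwe hwf => ?_⟩
  obtain ⟨x, rfl⟩ := Sym2.mem_iff_exists.mp hwe
  obtain ⟨y, rfl⟩ := Sym2.mem_iff_exists.mp hwf
  exact hc (hMG he) (hMG hf) (fun hxy : x = y => hef (hxy ▸ rfl)) ((hk _ he).trans (hk _ hf).symm)

lemma IsMatchingSet.insert {M : Finset (Sym2 V)} {e : Sym2 V} (hM : IsMatchingSet M)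
    (he : ¬ e.IsDiag) (hdisj : ∀ f ∈ M, ∀ v ∈ e, v ∉ f) : IsMatchingSet (insert e M) := by
  refine ⟨fun f hf => ?_, fun f hf g hg hfg w hwf hwg => ?_⟩
  · rcases Finset.mem_insert.mp hf with rfl | hf
    exacts [he, hM.1 f hf]
  rcases Finset.mem_insert.mp hf with rfl | hfM <;> rcases Finset.mem_insert.mp hg with rfl | hgM
  · exact hfg rfl
  · exact hdisj g hgM w hwf hwg
  · exact hdisj f hfM w hwg hwf
  · exact hM.2 f hfM g hgM hfg w hwf hwg

def IsRainbowMatching (G : SimpleGraph V) (c : Sym2 V → ℕ) (M : Finset (Sym2 V)) : Prop :=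
  ↑M ⊆ G.edgeSet ∧ IsMatchingSet M ∧ Set.InjOn c ↑M

lemma IsRainbowMatching.insert_of_deleteEdges_conflictEdges [Fintype V] {M : Finset (Sym2 V)}
    {u v : V} (hM : IsRainbowMatching (G.deleteEdges ↑(G.conflictEdges c u v)) c M)
    (huv : G.Adj u v) :
    IsRainbowMatching G c (insert s(u, v) M) ∧ (insert s(u, v) M).card = M.card + 1 := by
  obtain ⟨hMG, hmatch, hinj⟩ := hM
  have havoid : ∀ f ∈ M, u ∉ f ∧ v ∉ f ∧ c f ≠ c s(u, v) := fun f hf =>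
    notMem_of_mem_edgeSet_deleteEdges_conflictEdges (hMG hf)
  have huvM : s(u, v) ∉ M := fun h => (havoid _ h).1 (Sym2.mem_mk_left u v)
  refine ⟨⟨?_, hmatch.insert ?_ ?_, ?_⟩, Finset.card_insert_of_notMem huvM⟩
  · rw [Finset.coe_insert]
    exact Set.insert_subset (G.mem_edgeSet.mpr huv) (hMG.trans (edgeSet_mono (deleteEdges_le _)))
  · simpa using huv.ne
  · intro f hf w hw
    rcases Sym2.mem_iff.mp hw with rfl | rfl
    exacts [(havoid f hf).1, (havoid f hf).2.1]
  · rw [Finset.coe_insert, Set.injOn_insert (by simpa using huvM)]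
    exact ⟨hinj, fun ⟨f, hf, hcf⟩ => (havoid f hf).2.2 hcf⟩

lemma card_colorClass_lt_of_not_richClass [Fintype V] (hc : ProperColoring G c) {α : ℝ} {k : ℕ}
    (hk : ¬ RichClass G c α {k}) : ((G.colorClass c k).card : ℝ) < α * Fintype.card V := by
  by_contra! hle
  exact hk ⟨_, coe_colorClass_subset_edgeSet k, fun _ => color_eq_of_mem_colorClass,
    hc.isMatchingSet_of_color_eq (coe_colorClass_subset_edgeSet k)
      (fun _ => color_eq_of_mem_colorClass), hle⟩

theorem exists_isRainbowMatching_card_eq [Fintype V] (hc : ProperColoring G c) {D m : ℝ}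
    (hD : 0 ≤ D) (hdeg : ∀ v, (G.degree v : ℝ) ≤ D)
    (hcol : ∀ k, ((G.colorClass c k).card : ℝ) < m) (r : ℕ)
    (hE : r * (2 * D + m) ≤ G.edgeFinset.card) :
    ∃ M, IsRainbowMatching G c M ∧ M.card = r := by
  induction r generalizing G with
  | zero => exact ⟨∅, ⟨by simp, ⟨by simp, by simp⟩, by simp⟩, rfl⟩
  | succ r ih =>
    have hm : 0 < m := (Nat.cast_nonneg _).trans_lt (hcol 0)
    obtain ⟨e, he⟩ : G.edgeFinset.Nonempty := by
      rw [← Finset.card_pos, ← Nat.cast_pos (α := ℝ)]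
      push_cast at hE
      nlinarith
    induction e using Sym2.ind with | _ u v => ?_
    have huv : G.Adj u v := mem_edgeFinset.mp he
    set G' := G.deleteEdges ↑(G.conflictEdges c u v)
    have hG'G : G' ≤ G := deleteEdges_le _
    have hE' : (r : ℝ) * (2 * D + m) ≤ G'.edgeFinset.card := by
      have hcount : (G.edgeFinset.card : ℝ) ≤ G'.edgeFinset.card +
          (G.degree u + G.degree v + (G.colorClass c (c s(u, v))).card) := by
        exact_mod_cast (card_edgeFinset_le_deleteEdges_add _).trans
          (Nat.add_le_add_left (card_conflictEdges_le u v) _)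
      push_cast at hE
      linarith [hdeg u, hdeg v, hcol (c s(u, v))]
    obtain ⟨M, hM, hcard⟩ := ih (hc.of_le hG'G)
      (fun v => (hdeg v).trans' (Nat.cast_le.mpr (by convert degree_le_of_le hG'G)))
      (fun k => (hcol k).trans_le' (by exact_mod_cast Finset.card_le_card (colorClass_mono hG'G k)))
      (by convert hE')
    obtain ⟨hM', hcard'⟩ := hM.insert_of_deleteEdges_conflictEdges huv
    exact ⟨_, hM', by rw [hcard', hcard]⟩

end

theorem stmt8_general {V : Type*} [Fintype V] (G : SimpleGraph V)
    (c : Sym2 V → ℕ) (r : ℕ)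
    (hproper : ProperColoring G c)
    (hedges : (r : ℝ) * (Fintype.card V : ℝ) / 3 ≤ (G.edgeFinset.card : ℝ))
    (hmaxdeg : ∀ v : V, (G.degree v : ℝ) ≤ (Fintype.card V : ℝ) / 10)
    (hnorich : ∀ k : ℕ, ¬ RichClass G c (1 / 10) {k}) :
    ∃ M : Finset (Sym2 V), ↑M ⊆ G.edgeSet ∧ IsMatchingSet M ∧
      Set.InjOn c ↑M ∧ M.card = r := by
  have hcol (k : ℕ) : ((G.colorClass c k).card : ℝ) < Fintype.card V / 10 := by
    simpa [div_eq_inv_mul] using card_colorClass_lt_of_not_richClass hproper (hnorich k)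
  have hE : (r : ℝ) * (2 * (Fintype.card V / 10) + Fintype.card V / 10) ≤ G.edgeFinset.card := by
    have : (0 : ℝ) ≤ r * Fintype.card V := by positivity
    linarith
  obtain ⟨M, ⟨hMG, hmatch, hinj⟩, hcard⟩ :=
    exists_isRainbowMatching_card_eq hproper (by positivity) hmaxdeg hcol r hE
  exact ⟨M, hMG, hmatch, hinj, hcard⟩

theorem stmt8 {V : Type*} [Fintype V] [DecidableEq V] (G : SimpleGraph V)
    (c : Sym2 V → ℕ) (r : ℕ)
    (hproper : ProperColoring G c)
    (hedges : (r : ℝ) * (Fintype.card V : ℝ) / 3 ≤ (G.edgeFinset.card : ℝ))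
    (hmaxdeg : ∀ v : V, (G.degree v : ℝ) ≤ (Fintype.card V : ℝ) / 10)
    (hnorich : ∀ k : ℕ, ¬ RichClass G c (1 / 10) {k}) :
    ∃ M : Finset (Sym2 V), ↑M ⊆ G.edgeSet ∧ IsMatchingSet M ∧
      Set.InjOn c ↑M ∧ M.card = r :=
  stmt8_general G c r hproper hedges hmaxdeg hnorich
end
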